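/- arXiv:1205.4960 — 10 statements merged into one kernel-verified Lean document; each statement's English description precedes it below -/
import Mathlib

section
/- Let G be a permutation group on Ω and B a partition of Ω. Let H ≤ Sym(Ω) be the subgroup of all permutations fixing every part of B setwise. If G is join-coherent then G ∩ H is join-coherent, and if G is meet-coherent then G ∩ H is meet-coherent. -/
/-- The orbit partition of a permutation `g`, as a setoid on `Ω`. -/
def piPart {Ω : Type*} (g : Equiv.Perm Ω) : Setoid Ω :=
  MulAction.orbitRel (Subgroup.zpowers g) Ω

/-- The set of orbit partitions of elements of a permutation group `G`. -/
def piSet {Ω : Type*} (G : Subgroup (Equiv.Perm Ω)) : Set (Setoid Ω) :=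
  {P | ∃ g ∈ G, piPart g = P}

/-- `G` is join-coherent if its set of orbit partitions is closed under joins. -/
def JoinCoherent {Ω : Type*} (G : Subgroup (Equiv.Perm Ω)) : Prop :=
  ∀ P ∈ piSet G, ∀ Q ∈ piSet G, P ⊔ Q ∈ piSet G

/-- `G` is meet-coherent if its set of orbit partitions is closed under meets. -/
def MeetCoherent {Ω : Type*} (G : Subgroup (Equiv.Perm Ω)) : Prop :=
  ∀ P ∈ piSet G, ∀ Q ∈ piSet G, P ⊓ Q ∈ piSet G

/-! The orbits of `g` refine `B` exactly when `g` maps every point into its own `B`-class, so the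
orbit partitions of `G ⊓ H` are those of `G` that lie below `B`. The partitions below `B` are
closed under joins, and meeting with anything keeps a partition below `B`. -/

section

open Equiv

variable {Ω : Type*}

def Setoid.classStabilizer (B : Setoid Ω) : Subgroup (Perm Ω) where
  carrier := {g | ∀ x, B (g x) x}
  mul_mem' hg hh x := B.trans (hg _) (hh x)
  one_mem' x := B.refl x
  inv_mem' {g} hg x := by simpa using B.symm (hg (g⁻¹ x))

namespace Setoid

variable {B : Setoid Ω} {g : Perm Ω}

theorem mem_classStabilizer_iff_image_classes :
    g ∈ B.classStabilizer ↔ ∀ c ∈ B.classes, (⇑g) '' c = c := by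
  constructor
  · rintro hg _ ⟨y, rfl⟩
    refine subset_antisymm ?_ fun z hz => ⟨g⁻¹ z, ?_, by simp⟩
    · rintro _ ⟨z, hz, rfl⟩
      exact B.trans (hg z) hz
    · exact B.trans ((B.classStabilizer.inv_mem hg) z) hz
  · intro hg x
    have hx : g x ∈ (⇑g) '' {z | B z x} := ⟨x, B.refl x, rfl⟩
    rwa [hg _ ⟨x, rfl⟩] at hx

end Setoid

theorem piPart_le_iff_mem_classStabilizer {g : Perm Ω} {B : Setoid Ω} :
    piPart g ≤ B ↔ g ∈ B.classStabilizer := by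
  constructor
  · intro hle x
    exact hle ⟨⟨g, Subgroup.mem_zpowers g⟩, rfl⟩
  · rintro hg _ y ⟨u, rfl⟩
    exact Subgroup.zpowers_le.mpr hg u.2 y

theorem piSet_inf_classStabilizer (G : Subgroup (Perm Ω)) (B : Setoid Ω) :
    piSet (G ⊓ B.classStabilizer) = piSet G ∩ Set.Iic B := by
  ext P
  constructor
  · rintro ⟨g, hg, rfl⟩
    exact ⟨⟨g, hg.1, rfl⟩, piPart_le_iff_mem_classStabilizer.mpr hg.2⟩
  · rintro ⟨⟨g, hg, rfl⟩, hle⟩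
    exact ⟨g, ⟨hg, piPart_le_iff_mem_classStabilizer.mp hle⟩, rfl⟩

theorem JoinCoherent.inf_classStabilizer {G : Subgroup (Perm Ω)} (hG : JoinCoherent G)
    (B : Setoid Ω) : JoinCoherent (G ⊓ B.classStabilizer) := by
  simp only [JoinCoherent, piSet_inf_classStabilizer] at hG ⊢
  rintro P ⟨hP, hPB⟩ Q ⟨hQ, hQB⟩
  exact ⟨hG P hP Q hQ, Set.mem_Iic.mpr (sup_le hPB hQB)⟩

theorem MeetCoherent.inf_classStabilizer {G : Subgroup (Perm Ω)} (hG : MeetCoherent G)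
    (B : Setoid Ω) : MeetCoherent (G ⊓ B.classStabilizer) := by
  simp only [MeetCoherent, piSet_inf_classStabilizer] at hG ⊢
  rintro P ⟨hP, hPB⟩ Q ⟨hQ, -⟩
  exact ⟨hG P hP Q hQ, Set.mem_Iic.mpr (inf_le_left.trans hPB)⟩

end

/-- If `H` is the subgroup of permutations fixing every part of a partition `B` setwise,
then join-coherence (resp. meet-coherence) of `G` passes to `G ⊓ H`. -/
theorem coherent_inter_partStabilizer {Ω : Type*} (G H : Subgroup (Equiv.Perm Ω))
    (B : Setoid Ω)
    (hH : ∀ g : Equiv.Perm Ω, g ∈ H ↔ ∀ c ∈ B.classes, (⇑g) '' c = c) :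
    (JoinCoherent G → JoinCoherent (G ⊓ H)) ∧
    (MeetCoherent G → MeetCoherent (G ⊓ H)) := by
  obtain rfl : H = B.classStabilizer :=
    SetLike.ext fun g => (hH g).trans Setoid.mem_classStabilizer_iff_image_classes.symm
  exact ⟨fun hG => hG.inf_classStabilizer B, fun hG => hG.inf_classStabilizer B⟩
end

section
/- Every point stabilizer of a join-coherent permutation group is join-coherent, and every point stabilizer of a meet-coherent permutation group is meet-coherent. -/
/-- If `g` fixes `ω`, then everything related to `ω` by `piPart g` equals `ω`. -/
lemma piPart_fix {Ω : Type*} {g : Equiv.Perm Ω} {ω : Ω} (h : g ω = ω) :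
    ∀ x, piPart g x ω → x = ω := by
  rintro x ⟨⟨u, k, rfl⟩, rfl⟩
  exact Equiv.Perm.zpow_apply_eq_self_of_apply_eq_self h k

/-- Conversely, if the `piPart g`-class of `ω` is a singleton, then `g` fixes `ω`. -/
lemma fix_of_piPart {Ω : Type*} {g : Equiv.Perm Ω} {ω : Ω}
    (h : ∀ x, piPart g x ω → x = ω) : g ω = ω :=
  h (g ω) ⟨⟨g, Subgroup.mem_zpowers g⟩, rfl⟩

/-- Point stabilizers of join-coherent (resp. meet-coherent) permutation groups are
join-coherent (resp. meet-coherent). -/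
theorem coherent_stabilizer {Ω : Type*} (G : Subgroup (Equiv.Perm Ω)) (ω : Ω) :
    (JoinCoherent G → JoinCoherent (G ⊓ MulAction.stabilizer (Equiv.Perm Ω) ω)) ∧
    (MeetCoherent G → MeetCoherent (G ⊓ MulAction.stabilizer (Equiv.Perm Ω) ω)) := by
  constructor
  · intro hG P hP Q hQ
    obtain ⟨g, hg, rfl⟩ := hP
    obtain ⟨h, hh, rfl⟩ := hQ
    rw [Subgroup.mem_inf] at hg hh
    obtain ⟨k, hkG, hk⟩ := hG _ ⟨g, hg.1, rfl⟩ _ ⟨h, hh.1, rfl⟩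
    have hgω : g ω = ω := hg.2
    have hhω : h ω = ω := hh.2
    have hkω : k ω = ω := by
      apply fix_of_piPart
      rw [hk, Setoid.sup_eq_eqvGen]
      intro x hx
      have key : ∀ a b, Relation.EqvGen (fun x y => piPart g x y ∨ piPart h x y) a b →
          (a = ω → b = ω) ∧ (b = ω → a = ω) := by
        intro a b hab
        induction hab with
        | rel a b hr =>
          constructor
          · rintro rfl
            rcases hr with hr | hr
            · exact (piPart_fix hgω b ((piPart g).symm hr)).symm ▸ rfl
            · exact (piPart_fix hhω b ((piPart h).symm hr)).symm ▸ rfl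
          · rintro rfl
            rcases hr with hr | hr
            · exact piPart_fix hgω a hr
            · exact piPart_fix hhω a hr
        | refl a => exact ⟨id, id⟩
        | symm a b _ ih => exact ⟨ih.2, ih.1⟩
        | trans a b c _ _ ih1 ih2 => exact ⟨fun h => ih2.1 (ih1.1 h), fun h => ih1.2 (ih2.2 h)⟩
      exact (key x ω hx).2 rfl
    exact ⟨k, Subgroup.mem_inf.mpr ⟨hkG, hkω⟩, hk⟩
  · intro hG P hP Q hQ
    obtain ⟨g, hg, rfl⟩ := hP
    obtain ⟨h, hh, rfl⟩ := hQ
    rw [Subgroup.mem_inf] at hg hh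
    obtain ⟨k, hkG, hk⟩ := hG _ ⟨g, hg.1, rfl⟩ _ ⟨h, hh.1, rfl⟩
    have hkω : k ω = ω := by
      apply fix_of_piPart
      rw [hk]
      intro x hx
      exact piPart_fix hg.2 x (Setoid.inf_iff_and.mp hx).1
    exact ⟨k, Subgroup.mem_inf.mpr ⟨hkG, hkω⟩, hk⟩
end

section
/- Any group acting semiregularly on a set is meet-coherent: for semiregular G ≤ Sym(Ω) and x, y ∈ G, if z generates ⟨x⟩ ∩ ⟨y⟩ then π(z) = π(x) ∧ π(y). -/
/-! If `a` lies in the `⟨x⟩`-orbit and in the `⟨y⟩`-orbit of `b`, say `a = xᵐ b = yᵏ b`, then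
semiregularity forces `xᵐ = yᵏ`, an element of `⟨x⟩ ∩ ⟨y⟩ = ⟨z⟩`; so `a` lies in the `⟨z⟩`-orbit
of `b`. The converse inclusion holds for any `z ∈ ⟨x⟩ ∩ ⟨y⟩`, and `⟨x⟩ ∩ ⟨y⟩` is always cyclic,
which gives meet-coherence. -/

namespace Equiv.Perm

variable {Ω : Type*}

lemma piPart_apply_iff (g : Perm Ω) {a b : Ω} :
    piPart g a b ↔ ∃ h ∈ Subgroup.zpowers g, h b = a := by
  rw [piPart, MulAction.orbitRel_apply, MulAction.mem_orbit_iff, Subtype.exists]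
  simp only [Subgroup.mk_smul, Perm.smul_def, exists_prop]

lemma piPart_mono {x z : Perm Ω} (hzx : Subgroup.zpowers z ≤ Subgroup.zpowers x) :
    piPart z ≤ piPart x := by
  intro a b hab
  obtain ⟨h, hz, rfl⟩ := (piPart_apply_iff z).1 hab
  exact (piPart_apply_iff x).2 ⟨h, hzx hz, rfl⟩

section Semiregular

variable {G : Subgroup (Perm Ω)} (hsemi : ∀ g ∈ G, ∀ ω : Ω, g ω = ω → g = 1)
include hsemi

lemma eq_of_apply_eq_of_semiregular {g h : Perm Ω} (hg : g ∈ G) (hh : h ∈ G) {ω : Ω}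
    (hgh : g ω = h ω) : g = h := by
  have hfix : (h⁻¹ * g) ω = ω := by simp [hgh]
  exact (inv_mul_eq_one.1 (hsemi _ (G.mul_mem (G.inv_mem hh) hg) ω hfix)).symm

lemma inf_piPart_le_of_semiregular {x y z : Perm Ω} (hx : x ∈ G) (hy : y ∈ G)
    (hxyz : Subgroup.zpowers x ⊓ Subgroup.zpowers y ≤ Subgroup.zpowers z) :
    piPart x ⊓ piPart y ≤ piPart z := by
  intro a b hab
  obtain ⟨⟨g, hgx, hga⟩, ⟨h, hhy, hha⟩⟩ :=
    And.imp (piPart_apply_iff x).1 (piPart_apply_iff y).1 (Setoid.inf_iff_and.1 hab)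
  have hgh : g = h := eq_of_apply_eq_of_semiregular hsemi
    (Subgroup.zpowers_le.2 hx hgx) (Subgroup.zpowers_le.2 hy hhy) (hga.trans hha.symm)
  exact (piPart_apply_iff z).2 ⟨g, hxyz ⟨hgx, hgh ▸ hhy⟩, hga⟩

lemma piPart_eq_inf_of_semiregular {x y z : Perm Ω} (hx : x ∈ G) (hy : y ∈ G)
    (hgen : Subgroup.zpowers x ⊓ Subgroup.zpowers y = Subgroup.zpowers z) :
    piPart z = piPart x ⊓ piPart y :=
  le_antisymm (le_inf (piPart_mono (hgen ▸ inf_le_left)) (piPart_mono (hgen ▸ inf_le_right)))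
    (inf_piPart_le_of_semiregular hsemi hx hy hgen.le)

lemma meetCoherent_of_semiregular : MeetCoherent G := by
  rintro _ ⟨x, hx, rfl⟩ _ ⟨y, hy, rfl⟩
  obtain ⟨z, hz⟩ := (Subgroup.isCyclic_iff_exists_zpowers_eq_top _).1
    (Subgroup.isCyclic_of_le (inf_le_left : Subgroup.zpowers x ⊓ Subgroup.zpowers y ≤ _))
  have hzG : z ∈ G := Subgroup.zpowers_le.2 hx (hz ▸ Subgroup.mem_zpowers z).1
  exact ⟨z, hzG, piPart_eq_inf_of_semiregular hsemi hx hy hz.symm⟩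

end Semiregular

end Equiv.Perm

open Equiv.Perm in
/-- A group acting semiregularly is meet-coherent; moreover for `x, y` in the group, if `z`
generates `⟨x⟩ ⊓ ⟨y⟩` then `π(z) = π(x) ⊓ π(y)`. -/
theorem semiregular_meetCoherent {Ω : Type*} (G : Subgroup (Equiv.Perm Ω))
    (hsemi : ∀ g ∈ G, ∀ ω : Ω, g ω = ω → g = 1)
    (x y z : Equiv.Perm Ω) (hx : x ∈ G) (hy : y ∈ G)
    (hgen : Subgroup.zpowers x ⊓ Subgroup.zpowers y = Subgroup.zpowers z) :
    piPart z = piPart x ⊓ piPart y ∧ MeetCoherent G :=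
  ⟨piPart_eq_inf_of_semiregular hsemi hx hy hgen, meetCoherent_of_semiregular hsemi⟩
end

section
/- A group G acting regularly on a set is join-coherent if and only if G is locally cyclic. -/
/-!
Taking orbit partitions turns joins of subgroups into joins of partitions. If `g = c ^ m`
and `h = c ^ n` then `⟨g⟩ ⊔ ⟨h⟩ = ⟨c ^ gcd(m, n)⟩`, so `π(g) ⊔ π(h) = π(c ^ gcd(m, n))`.
Conversely, if `π(c) = π(a) ⊔ π(b)` then `a ω` lies in the `⟨c⟩`-orbit of `ω`, say
`a ω = c ^ k ω`, and as point stabilizers are trivial, `a = c ^ k`; likewise for `b`.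
-/

open MulAction Subgroup

section OrbitRel

variable {G α : Type*} [Group G] [MulAction G α]

theorem MulAction.orbitRel_mono {H K : Subgroup G} (hHK : H ≤ K) :
    orbitRel H α ≤ orbitRel K α :=
  Setoid.le_def.2 fun ⟨⟨k, hk⟩, hky⟩ => ⟨⟨k, hHK hk⟩, hky⟩

theorem MulAction.orbitRel_sup (H K : Subgroup G) :
    orbitRel ↥(H ⊔ K) α = orbitRel H α ⊔ orbitRel K α := by
  refine le_antisymm ?_ (sup_le (orbitRel_mono le_sup_left) (orbitRel_mono le_sup_right))
  have generator :
      ∀ x ∈ (H : Set G) ∪ K, ∀ y : α, (orbitRel H α ⊔ orbitRel K α) (x • y) y := by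
    rintro x (hx | hx) y
    · exact Setoid.le_def.1 le_sup_left (mem_orbit y (⟨x, hx⟩ : H))
    · exact Setoid.le_def.1 le_sup_right (mem_orbit y (⟨x, hx⟩ : K))
  suffices ∀ k ∈ H ⊔ K, ∀ y : α, (orbitRel H α ⊔ orbitRel K α) (k • y) y by
    rintro _ y ⟨⟨k, hk⟩, rfl⟩
    exact this k hk y
  intro k hk
  rw [sup_eq_closure] at hk
  induction hk using closure_induction'' with
  | mem x hx => exact generator x hx
  | inv_mem x hx => exact generator x⁻¹ (hx.imp inv_mem inv_mem)
  | one => exact fun y => (one_smul G y).symm ▸ Setoid.refl' _ y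
  | mul a b _ _ iha ihb =>
    intro y
    rw [mul_smul]
    exact Setoid.trans' _ (iha (b • y)) (ihb y)

end OrbitRel

theorem Subgroup.zpowers_zpow_sup_zpowers_zpow {M : Type*} [Group M] (c : M) (m n : ℤ) :
    zpowers (c ^ m) ⊔ zpowers (c ^ n) = zpowers (c ^ (m.gcd n : ℤ)) := by
  have mem_of_dvd : ∀ k : ℤ, (m.gcd n : ℤ) ∣ k → c ^ k ∈ zpowers (c ^ (m.gcd n : ℤ)) := by
    rintro _ ⟨q, rfl⟩
    exact ⟨q, by simp only [zpow_mul]⟩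
  refine le_antisymm (sup_le ?_ ?_) ?_ <;> rw [zpowers_le]
  · exact mem_of_dvd m (Int.gcd_dvd_left _ _)
  · exact mem_of_dvd n (Int.gcd_dvd_right _ _)
  · rw [Int.gcd_eq_gcd_ab, zpow_add, zpow_mul, zpow_mul]
    exact mul_mem (mem_sup_left (zpow_mem (mem_zpowers _) _))
      (mem_sup_right (zpow_mem (mem_zpowers _) _))

theorem Subgroup.mem_zpowers_coe_iff {M : Type*} [Group M] {H : Subgroup M} {a c : H} :
    a ∈ zpowers c ↔ (a : M) ∈ zpowers (c : M) := by
  rw [← (zpowers c).mem_map_iff_mem H.subtype_injective, MonoidHom.map_zpowers]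
  rfl

section PermGroup

variable {Ω : Type*}

theorem piPart_zpow_sup_piPart_zpow (c : Equiv.Perm Ω) (m n : ℤ) :
    piPart (c ^ m) ⊔ piPart (c ^ n) = piPart (c ^ (m.gcd n : ℤ)) := by
  rw [piPart, piPart, piPart, ← orbitRel_sup, zpowers_zpow_sup_zpowers_zpow]

theorem mem_zpowers_of_piPart_le {G : Subgroup (Equiv.Perm Ω)}
    (hfree : ∀ g ∈ G, ∀ ω : Ω, g ω = ω → g = 1) {c g : Equiv.Perm Ω} (hc : c ∈ G) (hg : g ∈ G)
    (hle : piPart g ≤ piPart c) : g ∈ zpowers c := by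
  rcases isEmpty_or_nonempty Ω with hΩ | ⟨⟨ω⟩⟩
  · exact Subsingleton.elim c g ▸ mem_zpowers c
  obtain ⟨⟨k, hk⟩, hkω⟩ := Setoid.le_def.1 hle (mem_orbit ω (⟨g, mem_zpowers g⟩ : zpowers g))
  have hkG : k ∈ G := (zpowers_le.2 hc) hk
  have hfix : (k⁻¹ * g) ω = ω := by
    rw [Equiv.Perm.mul_apply, Equiv.Perm.inv_eq_iff_eq]
    exact hkω.symm
  have : k⁻¹ * g = 1 := hfree _ (mul_mem (inv_mem hkG) hg) ω hfix
  exact inv_mul_eq_one.1 this ▸ hk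

end PermGroup

theorem regular_joinCoherent_iff_locallyCyclic_general {Ω : Type*} (G : Subgroup (Equiv.Perm Ω))
    (hfree : ∀ g ∈ G, ∀ ω : Ω, g ω = ω → g = 1) :
    JoinCoherent G ↔
      ∀ a b : ↥G, ∃ c : ↥G, a ∈ Subgroup.zpowers c ∧ b ∈ Subgroup.zpowers c := by
  constructor
  · intro hJ a b
    obtain ⟨c, hc, hcab⟩ := hJ _ ⟨a, a.2, rfl⟩ _ ⟨b, b.2, rfl⟩
    refine ⟨⟨c, hc⟩, mem_zpowers_coe_iff.2 ?_, mem_zpowers_coe_iff.2 ?_⟩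
    · exact mem_zpowers_of_piPart_le hfree hc a.2 (hcab ▸ le_sup_left)
    · exact mem_zpowers_of_piPart_le hfree hc b.2 (hcab ▸ le_sup_right)
  · rintro hLC _ ⟨g, hg, rfl⟩ _ ⟨h, hh, rfl⟩
    obtain ⟨c, hgc, hhc⟩ := hLC ⟨g, hg⟩ ⟨h, hh⟩
    obtain ⟨m, rfl⟩ := mem_zpowers_iff.1 (mem_zpowers_coe_iff.1 hgc)
    obtain ⟨n, rfl⟩ := mem_zpowers_iff.1 (mem_zpowers_coe_iff.1 hhc)
    exact ⟨_, zpow_mem c.2 _, (piPart_zpow_sup_piPart_zpow (c : Equiv.Perm Ω) m n).symm⟩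

/-- A group acting regularly is join-coherent if and only if it is locally cyclic. -/
theorem regular_joinCoherent_iff_locallyCyclic {Ω : Type*} (G : Subgroup (Equiv.Perm Ω))
    (htrans : ∀ a b : Ω, ∃ g ∈ G, g a = b)
    (hfree : ∀ g ∈ G, ∀ ω : Ω, g ω = ω → g = 1) :
    JoinCoherent G ↔
      ∀ a b : ↥G, ∃ c : ↥G, a ∈ Subgroup.zpowers c ∧ b ∈ Subgroup.zpowers c :=
  regular_joinCoherent_iff_locallyCyclic_general G hfree
end

section
/- Let G ≤ Sym(Ω) be such that the set π(G) of orbit partitions of elements of G is totally ordered by refinement. Then no element of G has an infinite cycle, and the permutation group induced by G on each of its orbits is regular. -/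
section

open Equiv MulAction Pointwise

theorem MulAction.smul_mem_of_pow_smul_eq_self {M α : Type*} [Group M] [MulAction M α]
    {F : Set α} {h : M} (hF : h • F ⊆ F ∨ F ⊆ h • F) {x : α} (hx : x ∈ F) {n : ℕ}
    (hn : 0 < n) (hper : h ^ n • x = x) : h • x ∈ F := by
  rcases hF with hF | hF
  · exact hF (Set.smul_mem_smul_set hx)
  · obtain ⟨k, rfl⟩ : ∃ k, n = k + 1 := ⟨n - 1, by omega⟩
    have hmaps : Set.MapsTo (h⁻¹ • ·) F F := fun y hy =>
      Set.subset_smul_set_iff.1 hF (Set.smul_mem_smul_set hy)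
    have hiter : (h⁻¹) ^ k • x = h • x := by
      rw [inv_pow, inv_smul_eq_iff, smul_smul, ← pow_succ, hper]
    simpa only [smul_iterate, hiter] using hmaps.iterate k hx

variable {Ω : Type*}

namespace Equiv.Perm

theorem exists_pos_pow_apply_eq_self_of_zpow {g : Perm Ω} {x : Ω} {m : ℤ} (hm : m ≠ 0)
    (hper : (g ^ m) x = x) : ∃ n : ℕ, 0 < n ∧ (g ^ n) x = x := by
  refine ⟨m.natAbs, Int.natAbs_pos.2 hm, ?_⟩
  rcases Int.natAbs_eq m with hm' | hm'
  · rwa [hm', zpow_natCast] at hper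
  · rw [hm', zpow_neg, zpow_natCast, inv_eq_iff_eq] at hper
    exact hper.symm

theorem exists_zpow_apply_eq_of_piPart_le {a b : Perm Ω} (hab : piPart a ≤ piPart b)
    (x : Ω) : ∃ n : ℤ, (b ^ n) x = a x := by
  obtain ⟨⟨_, n, rfl⟩, hn⟩ := hab (x := a x) (y := x) ⟨⟨a, Subgroup.mem_zpowers a⟩, rfl⟩
  exact ⟨n, hn⟩

theorem fixedBy_subset_of_piPart_le {a b : Perm Ω} (hab : piPart a ≤ piPart b) :
    fixedBy Ω b ⊆ fixedBy Ω a := fun x hx => by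
  obtain ⟨n, hn⟩ := exists_zpow_apply_eq_of_piPart_le hab x
  rw [mem_fixedBy, Perm.smul_def, ← hn]
  exact mem_fixedBy_zpow hx n

theorem exists_pos_pow_apply_eq_self_of_piPart_pow_le {g : Perm Ω} {a b : ℕ}
    (hle : piPart (g ^ a) ≤ piPart (g ^ b)) (hba : ¬b ∣ a) (x : Ω) :
    ∃ n : ℕ, 0 < n ∧ (g ^ n) x = x := by
  obtain ⟨k, hk⟩ := exists_zpow_apply_eq_of_piPart_le hle x
  refine exists_pos_pow_apply_eq_self_of_zpow (m := -a + b * k) ?_ ?_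
  · intro hzero
    exact hba (Int.natCast_dvd_natCast.1 ⟨k, by omega⟩)
  · rw [zpow_add, mul_apply, zpow_mul, zpow_natCast, hk, zpow_neg, zpow_natCast,
      inv_eq_iff_eq]

end Equiv.Perm

open Equiv.Perm

theorem exists_pos_pow_apply_eq_self_of_isChain_piSet {G : Subgroup (Perm Ω)}
    (hchain : IsChain (· ≤ ·) (piSet G)) {g : Perm Ω} (hg : g ∈ G) (x : Ω) :
    ∃ n : ℕ, 0 < n ∧ (g ^ n) x = x := by
  rcases hchain.total ⟨_, pow_mem hg 2, rfl⟩ ⟨_, pow_mem hg 3, rfl⟩ with h23 | h32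
  · exact exists_pos_pow_apply_eq_self_of_piPart_pow_le h23 (by norm_num) x
  · exact exists_pos_pow_apply_eq_self_of_piPart_pow_le h32 (by norm_num) x

theorem smul_mem_fixedBy_of_isChain_piSet {G : Subgroup (Perm Ω)}
    (hchain : IsChain (· ≤ ·) (piSet G)) {g h : Perm Ω} (hg : g ∈ G) (hh : h ∈ G) {x : Ω}
    (hx : x ∈ fixedBy Ω g) : h • x ∈ fixedBy Ω g := by
  have hconj : h * g * h⁻¹ ∈ G := mul_mem (mul_mem hh hg) (inv_mem hh)
  have hcomparable : h • fixedBy Ω g ⊆ fixedBy Ω g ∨ fixedBy Ω g ⊆ h • fixedBy Ω g := by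
    rw [smul_fixedBy]
    exact (hchain.total ⟨g, hg, rfl⟩ ⟨_, hconj, rfl⟩).imp
      fixedBy_subset_of_piPart_le fixedBy_subset_of_piPart_le
  obtain ⟨n, hn, hper⟩ := exists_pos_pow_apply_eq_self_of_isChain_piSet hchain hh x
  exact smul_mem_of_pow_smul_eq_self hcomparable hx hn hper

end

/-- Regularity on orbits is stated as: an element of `G` fixing a point fixes its whole
`G`-orbit (transitivity on orbits being automatic). -/
theorem chain_no_infinite_cycle_and_regular_orbits {Ω : Type*}
    (G : Subgroup (Equiv.Perm Ω)) (hchain : IsChain (· ≤ ·) (piSet G)) :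
    (∀ g ∈ G, ∀ x : Ω, ∃ n : ℕ, 0 < n ∧ (g ^ n) x = x) ∧
    (∀ g ∈ G, ∀ x y : Ω, (∃ h ∈ G, h x = y) → g x = x → g y = y) := by
  refine ⟨fun g hg => exists_pos_pow_apply_eq_self_of_isChain_piSet hchain hg, ?_⟩
  rintro g hg x _ ⟨h, hh, rfl⟩ hgx
  exact smul_mem_fixedBy_of_isChain_piSet hchain hg hh hgx
end

section
/- Let G ≤ Sym(Ω) be such that π(G) is a chain under refinement. Then there is a single prime p such that every cycle of every element of G has length a power of p. -/
open Equiv MulAction Function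

namespace Equiv.Perm

variable {Ω : Type*}

theorem mem_orbit_zpowers_iff_sameCycle {g : Perm Ω} {x y : Ω} :
    y ∈ orbit (Subgroup.zpowers g) x ↔ g.SameCycle x y := by
  simp only [mem_orbit_iff, Subgroup.exists_zpowers]
  rfl

theorem ncard_setOf_sameCycle (g : Perm Ω) (x : Ω) :
    {y | g.SameCycle x y}.ncard = period g x := by
  have horbit : {y | g.SameCycle x y} = orbit (Subgroup.zpowers g) x := by
    ext y
    exact mem_orbit_zpowers_iff_sameCycle.symm
  rw [horbit, ← Nat.card_coe_set_eq, Nat.card_congr (orbitZPowersEquiv g x), Nat.card_zmod]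
  rfl

end Equiv.Perm

theorem piPart_le_piPart_iff {Ω : Type*} {a b : Perm Ω} :
    piPart a ≤ piPart b ↔ ∀ u v, a.SameCycle u v → b.SameCycle u v := by
  have hrel : ∀ g : Perm Ω, ∀ u v, piPart g u v ↔ g.SameCycle u v := fun g u v => by
    rw [piPart, orbitRel_apply, Perm.mem_orbit_zpowers_iff_sameCycle, Perm.sameCycle_comm]
  simp only [Setoid.le_def, hrel]

theorem rel_of_rel_apply_of_isPeriodicPt {α : Type*} {f : α → α} {r : α → α → Prop}
    (hr : ∀ u v, r u v → r (f u) (f v)) {n : ℕ} (hn : 0 < n) {u v : α}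
    (hu : IsPeriodicPt f n u) (hv : IsPeriodicPt f n v) (h : r (f u) (f v)) : r u v := by
  have hiter : ∀ k, r (f^[k + 1] u) (f^[k + 1] v) := by
    intro k
    induction k with
    | zero => exact h
    | succ k ih =>
      rw [iterate_succ_apply' f (k + 1), iterate_succ_apply' f (k + 1)]
      exact hr _ _ ih
  obtain ⟨k, rfl⟩ : ∃ k, n = k + 1 := ⟨n - 1, by omega⟩
  simpa only [hu.eq, hv.eq] using hiter k

theorem MulAction.exists_pow_period_dvd_prime {M α : Type*} [Monoid M] [MulAction M α]
    {m : M} {x y : α} (hx : 0 < period m x) (hy : 0 < period m y) {p : ℕ} (hp : p.Prime)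
    (hpx : p ∣ period m x) :
    ∃ k : ℕ, period (m ^ k) x ∣ p ∧ period (m ^ k) y ∣ p ∧
      (period (m ^ k) x = p ∨ period (m ^ k) y = p) := by
  set L := Nat.lcm (period m x) (period m y)
  have hL : 0 < L := Nat.lcm_pos hx hy
  have hpL : p ∣ L := hpx.trans (Nat.dvd_lcm_left _ _)
  have hdvd : ∀ z : α, period m z ∣ L → period (m ^ (L / p)) z ∣ p := fun z hz => by
    rw [← pow_smul_eq_iff_period_dvd, ← pow_mul, Nat.div_mul_cancel hpL]
    exact pow_smul_eq_iff_period_dvd.mpr hz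
  have hx' := hdvd x (Nat.dvd_lcm_left _ _)
  have hy' := hdvd y (Nat.dvd_lcm_right _ _)
  refine ⟨L / p, hx', hy', ?_⟩
  by_contra! hne
  have hfixed : ∀ z : α, period (m ^ (L / p)) z ∣ p → period (m ^ (L / p)) z ≠ p →
      period m z ∣ L / p := fun z hz hzp => by
    rw [← pow_smul_eq_iff_period_dvd, ← period_eq_one_iff]
    exact (hp.eq_one_or_self_of_dvd _ hz).resolve_right hzp
  have hLdvd : L ∣ L / p := Nat.lcm_dvd (hfixed x hx' hne.1) (hfixed y hy' hne.2)
  have := Nat.le_of_dvd (Nat.div_pos (Nat.le_of_dvd hL hpL) hp.pos) hLdvd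
  have := Nat.div_lt_self hL hp.one_lt
  omega

section Chain

variable {Ω : Type*} {G : Subgroup (Perm Ω)}

theorem piPart_total (hG : IsChain (· ≤ ·) (piSet G)) {a b : Perm Ω} (ha : a ∈ G) (hb : b ∈ G) :
    piPart a ≤ piPart b ∨ piPart b ≤ piPart a :=
  hG.total ⟨a, ha, rfl⟩ ⟨b, hb, rfl⟩

theorem period_pos_of_isChain (hG : IsChain (· ≤ ·) (piSet G)) {g : Perm Ω} (hg : g ∈ G)
    (x : Ω) : 0 < period g x := by
  refine Nat.pos_of_ne_zero fun h0 => ?_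
  have hdvd : ∀ m n : ℤ, (g ^ m).SameCycle x ((g ^ n) x) → m ∣ n := by
    rintro m n ⟨k, hk⟩
    rw [← zpow_mul] at hk
    have hfix : g ^ (m * k - n) • x = x := (g ^ n).injective <| by
      rw [Perm.smul_def, ← Perm.mul_apply, ← zpow_add, add_sub_cancel, hk]
    rw [zpow_smul_eq_iff_period_dvd, h0, Nat.cast_zero, zero_dvd_iff, sub_eq_zero] at hfix
    exact ⟨k, hfix.symm⟩
  have h2 : g ^ (2 : ℤ) ∈ G := zpow_mem hg 2
  have h3 : g ^ (3 : ℤ) ∈ G := zpow_mem hg 3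
  rcases piPart_total hG h2 h3 with h23 | h32
  · have := hdvd 3 2 (piPart_le_piPart_iff.mp h23 _ _ ⟨1, by rw [zpow_one]⟩)
    omega
  · have := hdvd 2 3 (piPart_le_piPart_iff.mp h32 _ _ ⟨1, by rw [zpow_one]⟩)
    omega

theorem sameCycle_apply_iff_of_isChain (hG : IsChain (· ≤ ·) (piSet G)) {a b : Perm Ω}
    (ha : a ∈ G) (hb : b ∈ G) (u v : Ω) : a.SameCycle (b u) (b v) ↔ a.SameCycle u v := by
  set n := period b u * period b v
  have hn : 0 < n := Nat.mul_pos (period_pos_of_isChain hG hb u) (period_pos_of_isChain hG hb v)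
  have hper : ∀ z, period b z ∣ n → IsPeriodicPt b n z := fun _ =>
    isPeriodicPt_iff_minimalPeriod_dvd.mpr
  have hu := hper u (dvd_mul_right _ _)
  have hv := hper v (dvd_mul_left _ _)
  have hconj : ∀ u v, (b⁻¹ * a * b).SameCycle u v ↔ a.SameCycle (b u) (b v) := fun u v => by
    simpa only [inv_inv] using Perm.sameCycle_conj (g := b⁻¹) (f := a)
  rcases piPart_total hG ha (mul_mem (mul_mem (inv_mem hb) ha) hb) with h | h
  · have h' : ∀ u v, a.SameCycle u v → a.SameCycle (b u) (b v) := fun u v huv =>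
      (hconj u v).mp (piPart_le_piPart_iff.mp h u v huv)
    exact ⟨rel_of_rel_apply_of_isPeriodicPt h' hn hu hv, h' u v⟩
  · have h' : ∀ u v, a.SameCycle (b u) (b v) → a.SameCycle u v := fun u v huv =>
      piPart_le_piPart_iff.mp h u v ((hconj u v).mpr huv)
    refine ⟨h' u v, fun huv => by_contra fun hne => ?_⟩
    exact rel_of_rel_apply_of_isPeriodicPt (r := fun u v => ¬a.SameCycle u v)
      (fun u v => mt (h' u v)) hn hu hv hne huv

theorem period_dvd_period_of_isChain (hG : IsChain (· ≤ ·) (piSet G)) {a b : Perm Ω}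
    (ha : a ∈ G) (hb : b ∈ G) (hab : piPart a ≤ piPart b) (x : Ω) : period a x ∣ period b x := by
  have hinv : ∀ (j : ℤ) (u v : Ω), a.SameCycle ((b ^ j) u) ((b ^ j) v) ↔ a.SameCycle u v :=
    fun j => sameCycle_apply_iff_of_isChain hG ha (zpow_mem hb j)
  let H : AddSubgroup ℤ :=
    { carrier := {j | a.SameCycle x ((b ^ j) x)}
      zero_mem' := Perm.SameCycle.refl a x
      add_mem' := fun {i j} hi hj => by
        have := (hinv i x ((b ^ j) x)).mpr hj
        rw [← Perm.mul_apply, ← zpow_add] at this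
        exact hi.trans this
      neg_mem' := fun {i} hi => by
        have := (hinv (-i) x ((b ^ i) x)).mpr hi
        rw [← Perm.mul_apply, ← zpow_add, neg_add_cancel, zpow_zero, Perm.one_apply] at this
        exact this.symm }
  obtain ⟨m, hm⟩ := Int.subgroup_cyclic H
  rw [← AddSubgroup.zmultiples_eq_closure] at hm
  have hmem : ∀ j, a.SameCycle x ((b ^ j) x) ↔ m ∣ j := fun j => by
    rw [← Int.mem_zmultiples_iff, ← hm]
    rfl
  have hcycle : ∀ y, a.SameCycle x y ↔ (b ^ m).SameCycle x y := by
    intro y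
    constructor
    · intro hy
      obtain ⟨j, rfl⟩ := piPart_le_piPart_iff.mp hab x y hy
      obtain ⟨k, rfl⟩ := (hmem j).mp hy
      exact ⟨k, by rw [← zpow_mul]⟩
    · rintro ⟨k, rfl⟩
      rw [← zpow_mul, hmem]
      exact dvd_mul_right m k
  have hperiod : period a x = period (b ^ m) x := by
    rw [← Perm.ncard_setOf_sameCycle, ← Perm.ncard_setOf_sameCycle]
    simp only [hcycle]
  rw [hperiod, ← pow_smul_eq_iff_period_dvd, ← zpow_natCast, ← zpow_mul,
    zpow_smul_eq_iff_period_dvd]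
  exact dvd_mul_left _ _

theorem prime_eq_of_dvd_period_of_isChain (hG : IsChain (· ≤ ·) (piSet G)) {g h : Perm Ω}
    (hg : g ∈ G) (hh : h ∈ G) {x y : Ω} {p q : ℕ} (hp : p.Prime) (hq : q.Prime)
    (hpx : p ∣ period g x) (hqy : q ∣ period h y) : p = q := by
  have hcompare : ∀ {a b : Perm Ω} {r s : ℕ}, a ∈ G → b ∈ G → piPart a ≤ piPart b → r.Prime →
      s.Prime → (period a x = r ∨ period a y = r) → period b x ∣ s → period b y ∣ s → r = s := by
    intro a b r s ha hb hab hr hs hra hbx hby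
    rw [← Nat.prime_dvd_prime_iff_eq hr hs]
    rcases hra with rfl | rfl
    · exact (period_dvd_period_of_isChain hG ha hb hab x).trans hbx
    · exact (period_dvd_period_of_isChain hG ha hb hab y).trans hby
  obtain ⟨k, hkx, hky, hk⟩ := exists_pow_period_dvd_prime (period_pos_of_isChain hG hg x)
    (period_pos_of_isChain hG hg y) hp hpx
  obtain ⟨l, hly, hlx, hl⟩ := exists_pow_period_dvd_prime (period_pos_of_isChain hG hh y)
    (period_pos_of_isChain hG hh x) hq hqy
  rcases piPart_total hG (pow_mem hg k) (pow_mem hh l) with hgh | hhg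
  · exact hcompare (pow_mem hg k) (pow_mem hh l) hgh hp hq hk hlx hly
  · exact (hcompare (pow_mem hh l) (pow_mem hg k) hhg hq hp hl.symm hkx hky).symm

end Chain

/-- If the set of orbit partitions of elements of `G` is a chain under refinement, then
there is a single prime `p` such that every cycle of every element of `G` has length a
power of `p`. -/
theorem chain_cycle_lengths_prime_power {Ω : Type*}
    (G : Subgroup (Equiv.Perm Ω)) (hchain : IsChain (· ≤ ·) (piSet G)) :
    ∃ p : ℕ, p.Prime ∧ ∀ g ∈ G, ∀ x : Ω,
      ∃ k : ℕ, {y : Ω | ∃ n : ℤ, (g ^ n) x = y}.ncard = p ^ k := by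
  by_cases hnontrivial : ∃ g ∈ G, ∃ x : Ω, period g x ≠ 1
  · obtain ⟨g₀, hg₀, x₀, hne⟩ := hnontrivial
    have hp : (period g₀ x₀).minFac.Prime := Nat.minFac_prime hne
    refine ⟨_, hp, fun g hg x => ⟨_, (Perm.ncard_setOf_sameCycle g x).trans
      (Nat.eq_prime_pow_of_unique_prime_dvd (period_pos_of_isChain hchain hg x).ne' ?_)⟩⟩
    exact fun hr hrd => prime_eq_of_dvd_period_of_isChain hchain hg hg₀ hr hp hrd (Nat.minFac_dvd _)
  · push Not at hnontrivial
    exact ⟨2, Nat.prime_two, fun g hg x =>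
      ⟨0, (Perm.ncard_setOf_sameCycle g x).trans (hnontrivial g hg x)⟩⟩
end

section
/- Let G be a transitive subgroup of Sym(Ω) such that π(G) is a chain under refinement. Then there is a prime p such that G is isomorphic to a subgroup of the Prüfer p-group. -/
/-- The Prüfer `p`-group: the subgroup of `ℚ/ℤ` generated by the images of `1/p^i`. -/
def pruferGroup (p : ℕ) : AddSubgroup (ℚ ⧸ AddSubgroup.zmultiples (1 : ℚ)) :=
  AddSubgroup.closure
    (Set.range fun i : ℕ =>
      (QuotientAddGroup.mk (1 / (p : ℚ) ^ i) : ℚ ⧸ AddSubgroup.zmultiples (1 : ℚ)))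

/-!
Transitivity and the chain condition force `G` to act freely. If `w ∈ G` fixes `a` and
`h a = b`, then `h w h⁻¹` fixes `b`. Either `π(w) ≤ π(h w h⁻¹)`, or conjugating the reverse
inequality by powers of `h` gives `π(hⁿ w h⁻ⁿ) ≤ π(h w h⁻¹)`; choosing `hⁿ` to fix the (finite)
`h`-orbit of `a` puts `w b` in the `h w h⁻¹`-orbit of `b` in both cases, so `w b = b`.

Freeness turns `π(u) ≤ π(v)` into `u ∈ ⟨v⟩`, so `G` is a torsion group whose cyclic subgroups form
a chain. Such a group is abelian, and comparing with a fixed element `y` of prime order `p` shows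
that all orders are powers of `p`. A character `G → ℚ/ℤ` not vanishing at `y` is injective on `⟨y⟩`,
hence injective, since every nontrivial cyclic subgroup either lies in `⟨y⟩` or contains it; its
values have `p`-power order, so they lie in the Prüfer `p`-group.
-/

section PermGroup

open Equiv Subgroup

variable {Ω : Type*}

lemma piPart_iff {g : Perm Ω} {x y : Ω} : piPart g x y ↔ ∃ n : ℤ, (g ^ n) y = x := by
  rw [piPart, MulAction.orbitRel_apply, MulAction.mem_orbit_iff, exists_zpowers]
  rfl

lemma piPart_apply_self (g : Perm Ω) (x : Ω) : piPart g (g x) x :=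
  piPart_iff.2 ⟨1, by simp⟩

lemma eq_of_piPart_of_apply_eq_self {g : Perm Ω} {x y : Ω} (h : piPart g y x) (hx : g x = x) :
    y = x := by
  obtain ⟨n, rfl⟩ := piPart_iff.1 h
  exact Function.IsFixedPt.perm_zpow hx n

lemma pow_apply_eq_self_of_piPart {h : Perm Ω} {a x : Ω} {n : ℕ} (hna : (h ^ n) a = a)
    (hx : piPart h x a) : (h ^ n) x = x := by
  obtain ⟨i, rfl⟩ := piPart_iff.1 hx
  rw [← Perm.mul_apply, ← zpow_natCast, ← zpow_add, add_comm, zpow_add, Perm.mul_apply,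
    zpow_natCast, hna]

lemma zpow_sub_apply_eq_self {g : Perm Ω} {a : Ω} {s t : ℤ} (h : (g ^ s) a = (g ^ t) a) :
    (g ^ (s - t)) a = a := by
  rw [sub_eq_neg_add, zpow_add, Perm.mul_apply, h, ← Perm.mul_apply, ← zpow_add, neg_add_cancel,
    zpow_zero, Perm.one_apply]

lemma piPart_conj (u v : Perm Ω) : piPart (v * u * v⁻¹) = (piPart u).comap ⇑v⁻¹ := by
  ext x y
  simp only [Setoid.comap_rel, piPart_iff, conj_zpow, Perm.mul_apply, ← Perm.eq_inv_iff_eq]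

lemma piPart_conj_mono {u u' : Perm Ω} (v : Perm Ω) (h : piPart u ≤ piPart u') :
    piPart (v * u * v⁻¹) ≤ piPart (v * u' * v⁻¹) := by
  rw [piPart_conj, piPart_conj]
  exact fun _ _ hxy => h hxy

lemma piPart_conj_pow_le {h w : Perm Ω} (H : piPart (h * w * h⁻¹) ≤ piPart w) {n : ℕ}
    (hn : 0 < n) : piPart (h ^ n * w * (h ^ n)⁻¹) ≤ piPart (h * w * h⁻¹) := by
  induction n, hn using Nat.le_induction with
  | base => simp
  | succ n _ ih =>
    calc piPart (h ^ (n + 1) * w * (h ^ (n + 1))⁻¹)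
        = piPart (h ^ n * (h * w * h⁻¹) * (h ^ n)⁻¹) := by congr 1; group
      _ ≤ piPart (h ^ n * w * (h ^ n)⁻¹) := piPart_conj_mono _ H
      _ ≤ piPart (h * w * h⁻¹) := ih

variable {G : Subgroup (Perm Ω)}

lemma piPart_le_total (hchain : IsChain (· ≤ ·) (piSet G)) {g h : Perm Ω} (hg : g ∈ G)
    (hh : h ∈ G) : piPart g ≤ piPart h ∨ piPart h ≤ piPart g :=
  hchain.total ⟨g, hg, rfl⟩ ⟨h, hh, rfl⟩

/-- An infinite `h`-orbit would make the orbit partitions of `h ^ 2` and `h ^ 3` incomparable. -/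
lemma exists_pow_apply_eq_self (hchain : IsChain (· ≤ ·) (piSet G)) {h : Perm Ω} (hh : h ∈ G)
    (a : Ω) : ∃ n : ℕ, 0 < n ∧ (h ^ n) a = a := by
  suffices ∃ n : ℤ, n ≠ 0 ∧ (h ^ n) a = a by
    obtain ⟨n, hn, hna⟩ := this
    refine ⟨n.natAbs, Int.natAbs_pos.2 hn, ?_⟩
    rcases n.natAbs_eq with e | e <;> rw [e] at hna
    · rwa [zpow_natCast] at hna
    · rw [zpow_neg, zpow_natCast, Perm.inv_eq_iff_eq] at hna
      exact hna.symm
  have hperiod (k m : ℕ) (H : piPart (h ^ k) ≤ piPart (h ^ m)) :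
      ∃ j : ℤ, (h ^ (m * j - k : ℤ)) a = a := by
    obtain ⟨j, hj⟩ := piPart_iff.1 (H (piPart_apply_self _ a))
    refine ⟨j, zpow_sub_apply_eq_self ?_⟩
    rwa [zpow_mul, zpow_natCast, zpow_natCast]
  rcases piPart_le_total hchain (pow_mem hh 2) (pow_mem hh 3) with H | H
  · obtain ⟨j, hj⟩ := hperiod 2 3 H
    exact ⟨_, by omega, hj⟩
  · obtain ⟨j, hj⟩ := hperiod 3 2 H
    exact ⟨_, by omega, hj⟩

variable (htrans : ∀ a b : Ω, ∃ g ∈ G, g a = b) (hchain : IsChain (· ≤ ·) (piSet G))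
include htrans hchain

lemma apply_eq_self_of_apply_eq_self {w : Perm Ω} (hw : w ∈ G) {a : Ω} (ha : w a = a)
    (b : Ω) : w b = b := by
  obtain ⟨h, hh, rfl⟩ := htrans a b
  rcases piPart_le_total hchain hh hw with Hhw | Hwh
  · rw [eq_of_piPart_of_apply_eq_self (Hhw (piPart_apply_self h a)) ha, ha]
  -- `h * w * h⁻¹` fixes `h a`, so it suffices to put `w (h a)` in the same orbit of it.
  refine eq_of_piPart_of_apply_eq_self (g := h * w * h⁻¹) ?_ (by simp [ha])
  rcases piPart_le_total hchain hw (mul_mem (mul_mem hh hw) (inv_mem hh)) with H | H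
  · exact H (piPart_apply_self w (h a))
  -- Otherwise `π(hⁿ w h⁻ⁿ) ≤ π(h w h⁻¹)`, and `hⁿ w h⁻ⁿ` agrees with `w` at `h a` once `hⁿ`
  -- fixes the `h`-orbit of `a`.
  obtain ⟨n, hn, hna⟩ := exists_pow_apply_eq_self hchain hh a
  have hb : piPart h (h a) a := piPart_apply_self h a
  have hfix_b : (h ^ n) (h a) = h a := pow_apply_eq_self_of_piPart hna hb
  have hfix_wb : (h ^ n) (w (h a)) = w (h a) :=
    pow_apply_eq_self_of_piPart hna ((piPart h).trans' (Hwh (piPart_apply_self w (h a))) hb)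
  have hconj : (h ^ n * w * (h ^ n)⁻¹) (h a) = w (h a) := by
    rw [Perm.mul_apply, Perm.mul_apply, Perm.inv_eq_iff_eq.2 hfix_b.symm, hfix_wb]
  have := piPart_apply_self (h ^ n * w * (h ^ n)⁻¹) (h a)
  rw [hconj] at this
  exact piPart_conj_pow_le H hn this

lemma eq_one_of_apply_eq_self {w : Perm Ω} (hw : w ∈ G) {a : Ω} (ha : w a = a) : w = 1 :=
  Perm.ext (apply_eq_self_of_apply_eq_self htrans hchain hw ha)

lemma mem_zpowers_of_piPart_le_s11 {u v : Perm Ω} (hu : u ∈ G) (hv : v ∈ G) (a : Ω)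
    (H : piPart u ≤ piPart v) : u ∈ zpowers v := by
  obtain ⟨n, hn⟩ := piPart_iff.1 (H (piPart_apply_self u a))
  have : (v ^ n)⁻¹ * u = 1 :=
    eq_one_of_apply_eq_self htrans hchain (mul_mem (inv_mem (zpow_mem hv n)) hu) (a := a)
      (by rw [Perm.mul_apply, ← hn, ← Perm.mul_apply, inv_mul_cancel, Perm.one_apply])
  exact mem_zpowers_iff.2 ⟨n, inv_mul_eq_one.1 this⟩

lemma mem_zpowers_or_mem_zpowers (x y : G) : x ∈ zpowers y ∨ y ∈ zpowers x := by
  rcases isEmpty_or_nonempty Ω with hΩ | ⟨⟨a⟩⟩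
  · exact Or.inl (Subsingleton.elim (1 : G) x ▸ one_mem _)
  have key (x y : G) (H : piPart (x : Perm Ω) ≤ piPart y) : x ∈ zpowers y := by
    obtain ⟨n, hn⟩ := mem_zpowers_iff.1 (mem_zpowers_of_piPart_le_s11 htrans hchain x.2 y.2 a H)
    exact mem_zpowers_iff.2 ⟨n, Subtype.ext (by simpa using hn)⟩
  exact (piPart_le_total hchain x.2 y.2).imp (key x y) (key y x)

lemma isOfFinOrder_of_transitive (x : G) : IsOfFinOrder x := by
  rcases isEmpty_or_nonempty Ω with hΩ | ⟨⟨a⟩⟩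
  · exact isOfFinOrder_of_finite x
  obtain ⟨n, hn, hna⟩ := exists_pow_apply_eq_self hchain x.2 a
  exact isOfFinOrder_iff_pow_eq_one.2
    ⟨n, hn, Subtype.ext (eq_one_of_apply_eq_self htrans hchain (pow_mem x.2 n) hna)⟩

end PermGroup

section Prufer

open AddSubgroup

lemma addOrderOf_nsmul_addOrderOf_div {A : Type*} [AddMonoid A] {x : A} {n : ℕ}
    (hx : addOrderOf x ≠ 0) (hn : n ∣ addOrderOf x) : addOrderOf ((addOrderOf x / n) • x) = n :=
  orderOf_pow_orderOf_div (x := Multiplicative.ofAdd x) hx hn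

lemma mem_pruferGroup_of_pow_nsmul_eq_zero {p k : ℕ} (hp : p ≠ 0)
    {x : ℚ ⧸ zmultiples (1 : ℚ)} (hx : p ^ k • x = 0) : x ∈ pruferGroup p := by
  induction x using QuotientAddGroup.induction_on with
  | H q =>
    rw [← QuotientAddGroup.mk_nsmul, QuotientAddGroup.eq_zero_iff] at hx
    obtain ⟨m, hm⟩ := mem_zmultiples_iff.1 hx
    rw [zsmul_one, nsmul_eq_mul, Nat.cast_pow] at hm
    have hq : (q : ℚ ⧸ zmultiples (1 : ℚ)) = m • QuotientAddGroup.mk (1 / (p : ℚ) ^ k) := by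
      rw [← QuotientAddGroup.mk_zsmul, zsmul_eq_mul, hm]
      field_simp
    rw [hq]
    exact zsmul_mem (subset_closure (Set.mem_range_self k)) m

lemma disjoint_zmultiples_ker_of_addOrderOf_eq_prime {A B : Type*} [AddGroup A] [AddGroup B]
    (f : A →+ B) {p : ℕ} (hp : p.Prime) {y : A} (hy : addOrderOf y = p) (hfy : f y ≠ 0) :
    Disjoint (zmultiples y) f.ker := by
  rw [disjoint_def]
  rintro _ ⟨m, rfl⟩ hm
  have hfy_order : addOrderOf (f y) = p :=
    ((hp.eq_one_or_self_of_dvd _ (hy ▸ addOrderOf_map_dvd f y)).resolve_left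
      (mt AddMonoid.addOrderOf_eq_one_iff.1 hfy))
  rw [AddMonoidHom.mem_ker, map_zsmul, ← addOrderOf_dvd_iff_zsmul_eq_zero, hfy_order] at hm
  exact addOrderOf_dvd_iff_zsmul_eq_zero.1 (hy ▸ hm)

variable {A B : Type*} [AddCommGroup A] [AddGroup B]
  (hcomp : ∀ x y : A, x ∈ zmultiples y ∨ y ∈ zmultiples x)
include hcomp

lemma injective_of_disjoint_zmultiples_ker (f : A →+ B) {y : A} (hy : y ≠ 0)
    (hdisj : Disjoint (zmultiples y) f.ker) : Function.Injective f := by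
  rw [injective_iff_map_eq_zero]
  intro z hz
  rcases hcomp z y with h | h
  · exact disjoint_def.1 hdisj h hz
  · exact absurd (disjoint_def.1 hdisj (mem_zmultiples y) (zmultiples_le_of_mem hz h)) hy

lemma exists_addOrderOf_eq_pow_of_addOrderOf_eq_prime {p : ℕ} (hp : p.Prime) {y : A}
    (hy : addOrderOf y = p) {z : A} (hz : IsOfFinAddOrder z) : ∃ k, addOrderOf z = p ^ k := by
  refine ⟨_, Nat.eq_prime_pow_of_unique_prime_dvd hz.addOrderOf_pos.ne' fun {q} hq hqz => ?_⟩
  have hw := addOrderOf_nsmul_addOrderOf_div hz.addOrderOf_pos.ne' hqz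
  rcases hcomp ((addOrderOf z / q) • z) y with h | h
  · exact (Nat.prime_dvd_prime_iff_eq hq hp).1 (hw ▸ hy ▸ addOrderOf_dvd_of_mem_zmultiples h)
  · exact ((Nat.prime_dvd_prime_iff_eq hp hq).1 (hw ▸ hy ▸ addOrderOf_dvd_of_mem_zmultiples h)).symm

theorem exists_injective_addMonoidHom_pruferGroup (htors : ∀ x : A, IsOfFinAddOrder x) :
    ∃ p : ℕ, p.Prime ∧ ∃ f : A →+ pruferGroup p, Function.Injective f := by
  rcases subsingleton_or_nontrivial A with hA | hA
  · exact ⟨2, Nat.prime_two, 0, Function.injective_of_subsingleton _⟩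
  obtain ⟨x, hx⟩ := exists_ne (0 : A)
  have hx_order : addOrderOf x ≠ 0 := (htors x).addOrderOf_pos.ne'
  obtain ⟨p, hp, hpx⟩ :=
    Nat.exists_prime_and_dvd (mt AddMonoid.addOrderOf_eq_one_iff.1 hx)
  set y := (addOrderOf x / p) • x
  have hy : addOrderOf y = p := addOrderOf_nsmul_addOrderOf_div hx_order hpx
  have hy0 : y ≠ 0 := fun h => hp.one_lt.ne' (by rw [← hy, h, addOrderOf_zero])
  obtain ⟨c, hc⟩ := CharacterModule.exists_character_apply_ne_zero_of_ne_zero hy0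
  have hc_inj : Function.Injective c := injective_of_disjoint_zmultiples_ker hcomp c hy0
    (disjoint_zmultiples_ker_of_addOrderOf_eq_prime c hp hy hc)
  have hc_mem (z : A) : c z ∈ pruferGroup p := by
    obtain ⟨k, hk⟩ := exists_addOrderOf_eq_pow_of_addOrderOf_eq_prime hcomp hp hy (htors z)
    refine mem_pruferGroup_of_pow_nsmul_eq_zero (k := k) hp.ne_zero ?_
    rw [← map_nsmul, ← hk, addOrderOf_nsmul_eq_zero, map_zero]
  exact ⟨p, hp, c.codRestrict _ hc_mem, (c.injective_codRestrict _ hc_mem).2 hc_inj⟩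

end Prufer

theorem exists_mulEquiv_addSubgroup_pruferGroup {H : Type*} [Group H]
    (hcomp : ∀ x y : H, x ∈ Subgroup.zpowers y ∨ y ∈ Subgroup.zpowers x)
    (htors : ∀ x : H, IsOfFinOrder x) :
    ∃ p : ℕ, p.Prime ∧ ∃ P : AddSubgroup ↥(pruferGroup p), Nonempty (H ≃* Multiplicative ↥P) := by
  let _ : CommGroup H :=
    { mul_comm := fun x y => by
        rcases hcomp x y with h | h <;> obtain ⟨k, rfl⟩ := Subgroup.mem_zpowers_iff.1 h
        exacts [(Commute.self_zpow y k).symm, Commute.self_zpow x k] }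
  have hcomp' (x y : Additive H) : x ∈ AddSubgroup.zmultiples y ∨ y ∈ AddSubgroup.zmultiples x :=
    hcomp x.toMul y.toMul
  obtain ⟨p, hp, f, hf⟩ := exists_injective_addMonoidHom_pruferGroup hcomp'
    fun x => (isOfFinAddOrder_ofMul_iff (x := x.toMul)).2 (htors x.toMul)
  exact ⟨p, hp, f.range, ⟨AddEquiv.toMultiplicativeRight (AddMonoidHom.ofInjective hf)⟩⟩

/-- If `G` is a transitive permutation group whose set of orbit partitions is a chain
under refinement, then `G` is isomorphic to a subgroup of a Prüfer `p`-group. -/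
theorem transitive_chain_subgroup_prufer {Ω : Type*}
    (G : Subgroup (Equiv.Perm Ω))
    (htrans : ∀ a b : Ω, ∃ g ∈ G, g a = b)
    (hchain : IsChain (· ≤ ·) (piSet G)) :
    ∃ p : ℕ, p.Prime ∧ ∃ P : AddSubgroup ↥(pruferGroup p),
      Nonempty (↥G ≃* Multiplicative ↥P) :=
  exists_mulEquiv_addSubgroup_pruferGroup (mem_zpowers_or_mem_zpowers htrans hchain)
    (isOfFinOrder_of_transitive htrans hchain)
end

section
/- Let G ≤ Sym(X) and H ≤ Sym(Y) be permutation groups acting on disjoint sets. The direct product G × H acting on the disjoint union X ⊔ Y (componentwise) is join-coherent if and only if both G and H are join-coherent; likewise for meet-coherence. -/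
section Aux

variable {X Y : Type*}

lemma piPart_rel {Ω : Type*} (g : Equiv.Perm Ω) (a b : Ω) :
    (piPart g) a b ↔ ∃ n : ℤ, (g ^ n) b = a := by
  show (MulAction.orbitRel (Subgroup.zpowers g) Ω) a b ↔ _
  rw [MulAction.orbitRel_apply, MulAction.mem_orbit_iff]
  constructor
  · rintro ⟨⟨k, n, rfl⟩, hk⟩; exact ⟨n, hk⟩
  · rintro ⟨n, hn⟩; exact ⟨⟨g ^ n, n, rfl⟩, hn⟩

/-- The disjoint sum of two setoids. -/
def sumSetoid (P : Setoid X) (Q : Setoid Y) : Setoid (X ⊕ Y) where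
  r := Sum.LiftRel P.r Q.r
  iseqv := by
    constructor
    · rintro (x | y)
      · exact Sum.LiftRel.inl (P.refl x)
      · exact Sum.LiftRel.inr (Q.refl y)
    · rintro _ _ (h | h)
      · exact Sum.LiftRel.inl (P.symm h)
      · exact Sum.LiftRel.inr (Q.symm h)
    · rintro _ _ _ (h | h) h'
      · cases h' with
        | inl h' => exact Sum.LiftRel.inl (P.trans h h')
      · cases h' with
        | inr h' => exact Sum.LiftRel.inr (Q.trans h h')

@[simp] lemma sumSetoid_inl_inl {P : Setoid X} {Q : Setoid Y} {a b : X} :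
    sumSetoid P Q (Sum.inl a) (Sum.inl b) ↔ P a b := by
  constructor
  · rintro (h | h); exact h
  · exact Sum.LiftRel.inl

@[simp] lemma sumSetoid_inr_inr {P : Setoid X} {Q : Setoid Y} {a b : Y} :
    sumSetoid P Q (Sum.inr a) (Sum.inr b) ↔ Q a b := by
  constructor
  · rintro (h | h); exact h
  · exact Sum.LiftRel.inr

lemma sumSetoid_inj {P P' : Setoid X} {Q Q' : Setoid Y}
    (h : sumSetoid P Q = sumSetoid P' Q') : P = P' ∧ Q = Q' := by
  constructor
  · ext a b
    rw [← sumSetoid_inl_inl (Q := Q), h, sumSetoid_inl_inl]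
  · ext a b
    rw [← sumSetoid_inr_inr (P := P), h, sumSetoid_inr_inr]

lemma piPart_sumCongr (g : Equiv.Perm X) (h : Equiv.Perm Y) :
    piPart (Equiv.sumCongr g h) = sumSetoid (piPart g) (piPart h) := by
  have key : ∀ (n : ℤ) (z : X ⊕ Y),
      ((Equiv.sumCongr g h) ^ n) z = Sum.map (g ^ n) (h ^ n) z := by
    intro n z
    have : (Equiv.sumCongr g h) ^ n = Equiv.sumCongr (g ^ n) (h ^ n) := by
      have := map_zpow (Equiv.Perm.sumCongrHom X Y) (g, h) n
      simpa [Equiv.Perm.sumCongrHom, Prod.pow_def] using this.symm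
    rw [this]; rfl
  ext a b
  cases a with
  | inl a =>
    cases b with
    | inl b =>
      rw [sumSetoid_inl_inl, piPart_rel, piPart_rel]
      constructor
      · rintro ⟨n, hn⟩
        rw [key] at hn
        exact ⟨n, Sum.inl.inj hn⟩
      · rintro ⟨n, hn⟩
        exact ⟨n, by rw [key]; simp only [Sum.map_inl, hn]⟩
    | inr b =>
      constructor
      · rintro h'
        rw [piPart_rel] at h'
        obtain ⟨n, hn⟩ := h'
        rw [key] at hn
        simp at hn
      · rintro (h' | h')
  | inr a =>
    cases b with
    | inl b =>
      constructor
      · rintro h'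
        rw [piPart_rel] at h'
        obtain ⟨n, hn⟩ := h'
        rw [key] at hn
        simp at hn
      · rintro (h' | h')
    | inr b =>
      rw [sumSetoid_inr_inr, piPart_rel, piPart_rel]
      constructor
      · rintro ⟨n, hn⟩
        rw [key] at hn
        exact ⟨n, Sum.inr.inj hn⟩
      · rintro ⟨n, hn⟩
        exact ⟨n, by rw [key]; simp only [Sum.map_inr, hn]⟩

lemma sumSetoid_mono {P P' : Setoid X} {Q Q' : Setoid Y} (h1 : P ≤ P') (h2 : Q ≤ Q') :
    sumSetoid P Q ≤ sumSetoid P' Q' := by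
  rw [Setoid.le_def]
  rintro _ _ (h | h)
  · exact Sum.LiftRel.inl (h1 h)
  · exact Sum.LiftRel.inr (h2 h)

lemma sumSetoid_sup (P P' : Setoid X) (Q Q' : Setoid Y) :
    sumSetoid P Q ⊔ sumSetoid P' Q' = sumSetoid (P ⊔ P') (Q ⊔ Q') := by
  apply le_antisymm
  · exact sup_le (sumSetoid_mono le_sup_left le_sup_left)
      (sumSetoid_mono le_sup_right le_sup_right)
  · set S := sumSetoid P Q ⊔ sumSetoid P' Q' with hS
    -- restriction of S to X
    let TX : Setoid X := ⟨fun a b => S (Sum.inl a) (Sum.inl b),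
      ⟨fun a => S.refl _, fun h => S.symm h, fun h h' => S.trans h h'⟩⟩
    let TY : Setoid Y := ⟨fun a b => S (Sum.inr a) (Sum.inr b),
      ⟨fun a => S.refl _, fun h => S.symm h, fun h h' => S.trans h h'⟩⟩
    have hPX : P ⊔ P' ≤ TX := by
      apply sup_le
      · intro a b h
        exact Setoid.le_def.mp le_sup_left (Sum.LiftRel.inl h : sumSetoid P Q _ _)
      · intro a b h
        exact Setoid.le_def.mp le_sup_right (Sum.LiftRel.inl h : sumSetoid P' Q' _ _)
    have hQY : Q ⊔ Q' ≤ TY := by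
      apply sup_le
      · intro a b h
        exact Setoid.le_def.mp le_sup_left (Sum.LiftRel.inr h : sumSetoid P Q _ _)
      · intro a b h
        exact Setoid.le_def.mp le_sup_right (Sum.LiftRel.inr h : sumSetoid P' Q' _ _)
    rw [Setoid.le_def]
    rintro _ _ (h | h)
    · exact hPX h
    · exact hQY h

lemma sumSetoid_inf (P P' : Setoid X) (Q Q' : Setoid Y) :
    sumSetoid P Q ⊓ sumSetoid P' Q' = sumSetoid (P ⊓ P') (Q ⊓ Q') := by
  ext a b
  rw [Setoid.inf_iff_and]
  cases a with
  | inl a =>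
    cases b with
    | inl b => simp [Setoid.inf_iff_and (r := P) (s := P')]
    | inr b =>
      constructor
      · rintro ⟨(h | h), _⟩
      · rintro (h | h)
  | inr a =>
    cases b with
    | inl b =>
      constructor
      · rintro ⟨(h | h), _⟩
      · rintro (h | h)
    | inr b => simp [Setoid.inf_iff_and (r := Q) (s := Q')]

lemma piSet_prod_iff (G : Subgroup (Equiv.Perm X)) (H : Subgroup (Equiv.Perm Y))
    (R : Setoid (X ⊕ Y)) :
    R ∈ piSet ((G.prod H).map (Equiv.Perm.sumCongrHom X Y)) ↔
      ∃ P ∈ piSet G, ∃ Q ∈ piSet H, sumSetoid P Q = R := by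
  constructor
  · rintro ⟨k, hk, rfl⟩
    rw [Subgroup.mem_map] at hk
    obtain ⟨⟨g, h⟩, hgh, rfl⟩ := hk
    rw [Subgroup.mem_prod] at hgh
    exact ⟨piPart g, ⟨g, hgh.1, rfl⟩, piPart h, ⟨h, hgh.2, rfl⟩,
      (piPart_sumCongr g h).symm⟩
  · rintro ⟨_, ⟨g, hg, rfl⟩, _, ⟨h, hh, rfl⟩, rfl⟩
    exact ⟨Equiv.sumCongr g h,
      Subgroup.mem_map.mpr ⟨(g, h), Subgroup.mem_prod.mpr ⟨hg, hh⟩, rfl⟩,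
      piPart_sumCongr g h⟩

end Aux

/-- The intransitive action of `G × H` on the disjoint union `X ⊔ Y` is join-coherent
(resp. meet-coherent) if and only if both `G` and `H` are. -/
theorem sum_coherent_iff {X Y : Type*}
    (G : Subgroup (Equiv.Perm X)) (H : Subgroup (Equiv.Perm Y)) :
    (JoinCoherent ((G.prod H).map (Equiv.Perm.sumCongrHom X Y)) ↔
      JoinCoherent G ∧ JoinCoherent H) ∧
    (MeetCoherent ((G.prod H).map (Equiv.Perm.sumCongrHom X Y)) ↔
      MeetCoherent G ∧ MeetCoherent H) := by
  have one_G : piPart (1 : Equiv.Perm X) ∈ piSet G := ⟨1, one_mem G, rfl⟩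
  have one_H : piPart (1 : Equiv.Perm Y) ∈ piSet H := ⟨1, one_mem H, rfl⟩
  constructor
  · constructor
    · intro hc
      constructor
      · intro P hP Q hQ
        have h1 := hc _ ((piSet_prod_iff G H _).mpr ⟨P, hP, _, one_H, rfl⟩)
          _ ((piSet_prod_iff G H _).mpr ⟨Q, hQ, _, one_H, rfl⟩)
        rw [sumSetoid_sup, sup_idem, piSet_prod_iff] at h1
        obtain ⟨P', hP', Q', _, heq⟩ := h1
        rw [← (sumSetoid_inj heq).1]; exact hP'
      · intro P hP Q hQ
        have h1 := hc _ ((piSet_prod_iff G H _).mpr ⟨_, one_G, P, hP, rfl⟩)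
          _ ((piSet_prod_iff G H _).mpr ⟨_, one_G, Q, hQ, rfl⟩)
        rw [sumSetoid_sup, sup_idem, piSet_prod_iff] at h1
        obtain ⟨P', _, Q', hQ', heq⟩ := h1
        rw [← (sumSetoid_inj heq).2]; exact hQ'
    · rintro ⟨hG, hH⟩ R hR S hS
      rw [piSet_prod_iff] at hR hS
      obtain ⟨P, hP, Q, hQ, rfl⟩ := hR
      obtain ⟨P', hP', Q', hQ', rfl⟩ := hS
      rw [sumSetoid_sup, piSet_prod_iff]
      exact ⟨_, hG _ hP _ hP', _, hH _ hQ _ hQ', rfl⟩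
  · constructor
    · intro hc
      constructor
      · intro P hP Q hQ
        have h1 := hc _ ((piSet_prod_iff G H _).mpr ⟨P, hP, _, one_H, rfl⟩)
          _ ((piSet_prod_iff G H _).mpr ⟨Q, hQ, _, one_H, rfl⟩)
        rw [sumSetoid_inf, inf_idem, piSet_prod_iff] at h1
        obtain ⟨P', hP', Q', _, heq⟩ := h1
        rw [← (sumSetoid_inj heq).1]; exact hP'
      · intro P hP Q hQ
        have h1 := hc _ ((piSet_prod_iff G H _).mpr ⟨_, one_G, P, hP, rfl⟩)
          _ ((piSet_prod_iff G H _).mpr ⟨_, one_G, Q, hQ, rfl⟩)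
        rw [sumSetoid_inf, inf_idem, piSet_prod_iff] at h1
        obtain ⟨P', _, Q', hQ', heq⟩ := h1
        rw [← (sumSetoid_inj heq).2]; exact hQ'
    · rintro ⟨hG, hH⟩ R hR S hS
      rw [piSet_prod_iff] at hR hS
      obtain ⟨P, hP, Q, hQ, rfl⟩ := hR
      obtain ⟨P', hP', Q', hQ', rfl⟩ := hS
      rw [sumSetoid_inf, piSet_prod_iff]
      exact ⟨_, hG _ hP _ hP', _, hH _ hQ _ hQ', rfl⟩
end

section
/- Let G ≤ Sym(X) and H ≤ Sym(Y) be join-coherent permutation groups with Y finite. Then the wreath product G ≀ H = G^Y ⋊ H, acting imprimitively on X × Y by (x,y)(f,h) = (x·(yf), yh), is join-coherent. -/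
/-!
The join `P` of the orbit partitions of `w₁, w₂ ∈ G ≀ H` is the orbit partition of the subgroup
`U = ⟨w₁, w₂⟩`. It lies over the join of the orbit partitions of the top parts `h₁, h₂`, which is
`piPart h` for some `h ∈ H` by join-coherence of `H`, and elements of `G` carry the fibres of `P`
along each cycle of `h`. The restriction of `P` to a fibre `X × {ρ}` is the orbit partition of the
setwise stabilizer of that fibre in `U`; as `Y` is finite this stabilizer has finite index, hence
is finitely generated (Schreier), and join-coherence of `G` realises its orbit partition as
`piPart (g ρ)` with `g ρ ∈ G`. Conjugating by the base element that carries every fibre to the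
fibre over its cycle representative turns `P` into the orbit partition of `(x, y) ↦ (c y x, h y)`,
where `c y = g y` at the representatives and `c y = 1` elsewhere.
-/

open Equiv Equiv.Perm MulAction Pointwise

section OrbitPartitions

variable {Ω : Type*}

theorem piPart_apply {g : Perm Ω} {a b : Ω} : piPart g a b ↔ g.SameCycle a b := by
  rw [sameCycle_comm, piPart, orbitRel_apply, mem_orbit_iff, Subgroup.exists_zpowers]
  rfl

theorem piPart_self_apply (g : Perm Ω) (a : Ω) : piPart g (g a) a :=
  piPart_apply.2 (sameCycle_apply_left.2 (SameCycle.refl g a))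

theorem orbitRel_closure_le_iff {s : Set (Perm Ω)} {E : Setoid Ω} :
    orbitRel (Subgroup.closure s) Ω ≤ E ↔ ∀ g ∈ s, ∀ a, E (g a) a := by
  refine ⟨fun h g hg a => h (orbitRel_apply.2 ⟨⟨g, Subgroup.subset_closure hg⟩, rfl⟩),
    fun h a b hab => ?_⟩
  obtain ⟨⟨u, hu⟩, rfl⟩ := hab
  change E (u b) b
  induction hu using Subgroup.closure_induction generalizing b with
  | mem g hg => exact h g hg b
  | one => exact E.refl' b
  | mul u v _ _ ihu ihv => exact E.trans' (ihu (v b)) (ihv b)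
  | inv u _ ihu => exact E.symm' (by simpa using ihu (u⁻¹ b))

theorem piPart_le_iff {g : Perm Ω} {E : Setoid Ω} : piPart g ≤ E ↔ ∀ a, E (g a) a := by
  rw [piPart, Subgroup.zpowers_eq_closure, orbitRel_closure_le_iff]
  simp

theorem orbitRel_closure_eq_sSup (s : Set (Perm Ω)) :
    orbitRel (Subgroup.closure s) Ω = sSup (piPart '' s) :=
  le_antisymm
    (orbitRel_closure_le_iff.2 fun g hg a =>
      le_sSup (Set.mem_image_of_mem piPart hg) (piPart_self_apply g a))
    (sSup_le <| by
      rintro _ ⟨g, hg, rfl⟩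
      exact piPart_le_iff.2 fun a =>
        orbitRel_apply.2 ⟨⟨g, Subgroup.subset_closure hg⟩, rfl⟩)

theorem piPart_one : piPart (1 : Perm Ω) = ⊥ :=
  le_bot_iff.1 (piPart_le_iff.2 fun _ => rfl)

theorem piPart_conj_apply {σ g : Perm Ω} {a b : Ω} :
    piPart (σ * g * σ⁻¹) a b ↔ piPart g (σ⁻¹ a) (σ⁻¹ b) := by
  simp only [piPart_apply, sameCycle_conj]

theorem JoinCoherent.sSup_mem_piSet {G : Subgroup (Perm Ω)} (hG : JoinCoherent G)
    {T : Finset (Perm Ω)} (hT : (T : Set (Perm Ω)) ⊆ G) : sSup (piPart '' T) ∈ piSet G := by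
  classical
  induction T using Finset.induction_on with
  | empty => exact ⟨1, G.one_mem, by simp [piPart_one]⟩
  | insert g T _ ih =>
    rw [Finset.coe_insert, Set.insert_subset_iff] at hT
    rw [Finset.coe_insert, Set.image_insert_eq, sSup_insert]
    exact hG _ ⟨g, hT.1, rfl⟩ _ (ih hT.2)

theorem JoinCoherent.orbitRel_mem_piSet {G K : Subgroup (Perm Ω)} (hG : JoinCoherent G)
    (hKG : K ≤ G) (hK : K.FG) : orbitRel K Ω ∈ piSet G := by
  obtain ⟨T, rfl⟩ := hK
  rw [orbitRel_closure_eq_sSup]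
  exact hG.sSup_mem_piSet (Subgroup.subset_closure.trans hKG)

end OrbitPartitions

section Wreath

variable {X Y : Type*}

def wreath (G : Subgroup (Perm X)) (H : Subgroup (Perm Y)) : Subgroup (Perm (X × Y)) where
  carrier := {w | ∃ f : Y → Perm X, ∃ h : Perm Y, h ∈ H ∧ (∀ y, f y ∈ G) ∧
    ∀ p : X × Y, w p = (f p.2 p.1, h p.2)}
  mul_mem' := by
    rintro _ _ ⟨f, h, hh, hf, hw⟩ ⟨f', h', hh', hf', hw'⟩
    exact ⟨fun y => f (h' y) * f' y, h * h', H.mul_mem hh hh', fun y => G.mul_mem (hf _) (hf' y),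
      fun p => by simp [hw, hw']⟩
  one_mem' := ⟨1, 1, H.one_mem, fun _ => G.one_mem, fun _ => rfl⟩
  inv_mem' := by
    rintro w ⟨f, h, hh, hf, hw⟩
    refine ⟨fun y => (f (h⁻¹ y))⁻¹, h⁻¹, H.inv_mem hh, fun y => G.inv_mem (hf _),
      fun p => ?_⟩
    rw [Perm.inv_eq_iff_eq, hw]
    simp

def wreathPerm (f : Y → Perm X) (h : Perm Y) : Perm (X × Y) where
  toFun p := (f p.2 p.1, h p.2)
  invFun p := ((f (h⁻¹ p.2))⁻¹ p.1, h⁻¹ p.2)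
  left_inv p := by simp
  right_inv p := by simp

@[simp]
theorem wreathPerm_apply (f : Y → Perm X) (h : Perm Y) (p : X × Y) :
    wreathPerm f h p = (f p.2 p.1, h p.2) :=
  rfl

@[simp]
theorem wreathPerm_inv_apply (f : Y → Perm X) (h : Perm Y) (p : X × Y) :
    (wreathPerm f h)⁻¹ p = ((f (h⁻¹ p.2))⁻¹ p.1, h⁻¹ p.2) :=
  rfl

theorem wreathPerm_mem_wreath {G : Subgroup (Perm X)} {H : Subgroup (Perm Y)} {f : Y → Perm X}
    {h : Perm Y} (hf : ∀ y, f y ∈ G) (hh : h ∈ H) : wreathPerm f h ∈ wreath G H :=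
  ⟨f, h, hh, hf, fun _ => rfl⟩

theorem smul_preimage_snd {w : Perm (X × Y)} {h : Perm Y} (hw : ∀ p, (w p).2 = h p.2) (y : Y) :
    w • (Prod.snd ⁻¹' {y} : Set (X × Y)) = Prod.snd ⁻¹' {h y} := by
  ext p
  rw [Set.mem_smul_set_iff_inv_smul_mem, Set.mem_preimage, Set.mem_singleton_iff, Perm.smul_def,
    ← h.injective.eq_iff, ← hw]
  simp

theorem piPart_le_comap_snd {w : Perm (X × Y)} {h : Perm Y} {Q : Setoid Y}
    (hw : ∀ p, (w p).2 = h p.2) (hQ : piPart h ≤ Q) : piPart w ≤ Q.comap Prod.snd :=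
  piPart_le_iff.2 fun p => by
    rw [Setoid.comap_rel, hw]
    exact hQ (piPart_self_apply h p.2)

def transportRel (G : Subgroup (Perm X)) (P : Setoid (X × Y)) : Setoid Y where
  r y y' := ∃ s ∈ G, ∀ z, P (s z, y) (z, y')
  iseqv :=
    { refl _ := ⟨1, G.one_mem, fun _ => P.refl' _⟩
      symm := fun ⟨s, hs, h⟩ =>
        ⟨s⁻¹, G.inv_mem hs, fun z => P.symm' (by simpa using h (s⁻¹ z))⟩
      trans := fun ⟨s, hs, h⟩ ⟨t, ht, h'⟩ =>
        ⟨s * t, G.mul_mem hs ht, fun z => P.trans' (h (t z)) (h' z)⟩ }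

theorem piPart_le_transportRel {G : Subgroup (Perm X)} {P : Setoid (X × Y)} {w : Perm (X × Y)}
    {f : Y → Perm X} {h : Perm Y} (hw : ∀ p, w p = (f p.2 p.1, h p.2)) (hf : ∀ y, f y ∈ G)
    (hP : piPart w ≤ P) : piPart h ≤ transportRel G P :=
  piPart_le_iff.2 fun y => ⟨f y, hf y, fun z => hw (z, y) ▸ hP (piPart_self_apply w (z, y))⟩

end Wreath

section Fibres

variable {X Y : Type*} {G : Subgroup (Perm X)} {H : Subgroup (Perm Y)}
  {U : Subgroup (Perm (X × Y))}

theorem mem_stabilizer_preimage_snd (hU : U ≤ wreath G H) {u : U} {z : X} {ρ : Y}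
    (hu : (u.1 (z, ρ)).2 = ρ) : u ∈ stabilizer U (Prod.snd ⁻¹' {ρ} : Set (X × Y)) := by
  obtain ⟨f, h, -, -, hw⟩ := hU u.2
  have hρ : h ρ = ρ := by rwa [hw] at hu
  rw [mem_stabilizer_iff, Subgroup.smul_def, smul_preimage_snd (fun p => by rw [hw]), hρ]

theorem finiteIndex_stabilizer_preimage_snd [Finite Y] (hU : U ≤ wreath G H) (ρ : Y) :
    (stabilizer U (Prod.snd ⁻¹' {ρ} : Set (X × Y))).FiniteIndex := by
  have hfin : (orbit U (Prod.snd ⁻¹' {ρ} : Set (X × Y))).Finite := by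
    refine (Set.finite_range fun y : Y => (Prod.snd ⁻¹' {y} : Set (X × Y))).subset ?_
    rintro _ ⟨u, rfl⟩
    obtain ⟨f, h, -, -, hw⟩ := hU u.2
    exact ⟨h ρ, (smul_preimage_snd (fun p => by rw [hw]) ρ).symm⟩
  exact ⟨by rw [index_stabilizer]; exact ((Set.ncard_pos hfin).2 ⟨_, mem_orbit_self _⟩).ne'⟩

theorem JoinCoherent.comap_orbitRel_mem_piSet [Finite Y] (hG : JoinCoherent G) [Group.FG U]
    (hU : U ≤ wreath G H) (ρ : Y) : (orbitRel U (X × Y)).comap (·, ρ) ∈ piSet G := by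
  set s : Set (X × Y) := Prod.snd ⁻¹' {ρ}
  have := finiteIndex_stabilizer_preimage_snd hU ρ
  let e : X ≃ s :=
    { toFun x := ⟨(x, ρ), rfl⟩
      invFun p := p.1.1
      left_inv _ := rfl
      right_inv := by
        rintro ⟨⟨x, y⟩, hy⟩
        obtain rfl : y = ρ := hy
        rfl }
  let ψ : stabilizer U s →* Perm X :=
    (permCongrHom e.symm).toMonoidHom.comp (toPermHom (stabilizer U s) s)
  have hψG : ψ.range ≤ G := by
    rintro _ ⟨u, rfl⟩
    obtain ⟨f, h, -, hf, hu⟩ := hU u.1.2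
    convert hf ρ
    ext z
    exact congrArg Prod.fst (hu (z, ρ))
  convert hG.orbitRel_mem_piSet hψG ((Group.fg_iff_subgroup_fg _).1 (Group.fg_range ψ)) using 1
  ext z z'
  rw [Setoid.comap_rel, orbitRel_apply, orbitRel_apply, mem_orbit_iff, mem_orbit_iff]
  constructor
  · rintro ⟨u, hu⟩
    have hu_st :=
      mem_stabilizer_preimage_snd hU (u := u) (z := z') (ρ := ρ) (congrArg Prod.snd hu)
    exact ⟨⟨_, ⟨u, hu_st⟩, rfl⟩, congrArg Prod.fst hu⟩
  · rintro ⟨⟨_, u, rfl⟩, hu⟩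
    refine ⟨u.1, Prod.ext hu ?_⟩
    have := Set.smul_mem_smul_set (a := u.1) (show (z', ρ) ∈ s from rfl)
    rwa [mem_stabilizer_iff.1 u.2] at this

end Fibres

section Representatives

variable {X Y : Type*} [DecidableEq Y] {h : Perm Y} {r : Y → Y}

def wreathPermAtReps (r : Y → Y) (g : Y → Perm X) (h : Perm Y) : Perm (X × Y) :=
  wreathPerm (fun y => if r y = y then g y else 1) h

theorem piPart_wreathPermAtReps_imp (hr' : ∀ y y', piPart h y y' → r y = r y')
    (g : Y → Perm X) {x x' : X} {y y' : Y} (hw : piPart (wreathPermAtReps r g h) (x, y) (x', y')) :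
    piPart h y y' ∧ piPart (g (r y)) x x' := by
  let E : Setoid (X × Y) :=
    { r p p' := piPart h p.2 p'.2 ∧ piPart (g (r p.2)) p.1 p'.1
      iseqv :=
        { refl _ := ⟨Setoid.refl' _ _, Setoid.refl' _ _⟩
          symm := fun ⟨h₁, h₂⟩ => ⟨Setoid.symm' _ h₁, hr' _ _ h₁ ▸ Setoid.symm' _ h₂⟩
          trans := fun ⟨h₁, h₂⟩ ⟨h₁', h₂'⟩ =>
            ⟨Setoid.trans' _ h₁ h₁', Setoid.trans' _ h₂ (hr' _ _ h₁ ▸ h₂')⟩ } }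
  refine (piPart_le_iff (E := E)).2 (fun ⟨z, v⟩ => ⟨piPart_self_apply h v, ?_⟩) hw
  change piPart (g (r (h v))) _ z
  rw [hr' _ _ (piPart_self_apply h v), wreathPermAtReps, wreathPerm_apply]
  split_ifs with hv
  · exact hv ▸ piPart_self_apply _ z
  · exact Setoid.refl' _ z

theorem piPart_wreathPermAtReps_of_rep [Finite Y] (hr' : ∀ y y', piPart h y y' → r y = r y')
    (g : Y → Perm X) {ρ y : Y} (hρ : r ρ = ρ) (hy : piPart h ρ y) (z : X) :
    piPart (wreathPermAtReps r g h) (z, ρ) (g ρ z, y) := by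
  set w := wreathPermAtReps r g h
  have first : ∀ z, piPart w (z, ρ) (g ρ z, h ρ) := fun z => by
    simpa [w, wreathPermAtReps, hρ] using Setoid.symm' _ (piPart_self_apply w (z, ρ))
  -- Along the `h`-cycle of `ρ`, `w` changes the first coordinate only when it leaves `ρ`.
  have step : ∀ (n : ℕ) z, piPart w (z, ρ) (g ρ z, (h ^ n) (h ρ)) := by
    intro n
    induction n with
    | zero => exact first
    | succ n ih =>
      intro z
      rw [pow_succ', Perm.mul_apply]
      by_cases hn : (h ^ n) (h ρ) = ρ
      · rw [hn]
        exact first z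
      · have hrn : r ((h ^ n) (h ρ)) ≠ (h ^ n) (h ρ) := by
          rwa [hr' _ ρ (piPart_apply.2 (sameCycle_pow_left.2 (sameCycle_apply_left.2
            (SameCycle.refl h ρ)))), hρ, ne_comm]
        refine Setoid.trans' _ (ih z) (Setoid.symm' _ ?_)
        simpa [w, wreathPermAtReps, hrn] using piPart_self_apply w (g ρ z, (h ^ n) (h ρ))
  obtain ⟨n, rfl⟩ := (sameCycle_apply_left.2 (piPart_apply.1 hy)).exists_nat_pow_eq
  exact step n z

theorem piPart_wreathPermAtReps_iff [Finite Y] (hr : ∀ y, piPart h (r y) y)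
    (hr' : ∀ y y', piPart h y y' → r y = r y') (g : Y → Perm X) {x x' : X} {y y' : Y} :
    piPart (wreathPermAtReps r g h) (x, y) (x', y') ↔ piPart h y y' ∧ piPart (g (r y)) x x' := by
  refine ⟨piPart_wreathPermAtReps_imp hr' g, fun ⟨hyy', hxx'⟩ => ?_⟩
  set w := wreathPermAtReps r g h
  set ρ := r y
  have hρ : r ρ = ρ := hr' _ _ (hr y)
  have vert : ∀ y', piPart h ρ y' → ∀ z, piPart w (z, ρ) (z, y') := fun y' hy' z => by
    have h₁ := piPart_wreathPermAtReps_of_rep hr' g hρ (Setoid.refl' _ ρ) ((g ρ)⁻¹ z)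
    have h₂ := piPart_wreathPermAtReps_of_rep hr' g hρ hy' ((g ρ)⁻¹ z)
    simp only [Perm.coe_inv, apply_symm_apply] at h₁ h₂
    exact Setoid.trans' _ (Setoid.symm' _ h₁) h₂
  have fibre : piPart (g ρ) ≤ (piPart w).comap (·, ρ) := piPart_le_iff.2 fun z =>
    Setoid.symm' _ (piPart_wreathPermAtReps_of_rep hr' g hρ (Setoid.refl' _ ρ) z)
  exact Setoid.trans' _ (Setoid.symm' _ (vert y (hr y) x))
    (Setoid.trans' _ (fibre hxx') (vert y' (Setoid.trans' _ (hr y) hyy') x'))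

end Representatives

theorem mem_piSet_wreath {X Y : Type*} [Finite Y] {G : Subgroup (Perm X)} {H : Subgroup (Perm Y)}
    {P : Setoid (X × Y)} {h : Perm Y} (hh : h ∈ H) (hPh : P ≤ (piPart h).comap Prod.snd)
    (hhP : piPart h ≤ transportRel G P) (hfib : ∀ ρ, P.comap (·, ρ) ∈ piSet G) :
    P ∈ piSet (wreath G H) := by
  classical
  set r : Y → Y := fun y => (Quotient.mk (piPart h) y).out
  have hr : ∀ y, piPart h (r y) y := fun y => Quotient.mk_out y
  have hr' : ∀ y y', piPart h y y' → r y = r y' := fun y y' hyy' =>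
    congrArg Quotient.out (Quotient.sound hyy')
  choose g hg hgP using hfib
  choose σ hσ hσP using fun y => hhP (Setoid.symm' _ (hr y))
  have hσP' : ∀ x y, P (x, y) ((σ y)⁻¹ x, r y) := fun x y => by
    simpa using hσP y ((σ y)⁻¹ x)
  have hσW : wreathPerm σ 1 ∈ wreath G H := wreathPerm_mem_wreath hσ H.one_mem
  refine ⟨wreathPerm σ 1 * wreathPermAtReps r g h * (wreathPerm σ 1)⁻¹,
    mul_mem (mul_mem hσW (wreathPerm_mem_wreath (fun y => ?_) hh)) (inv_mem hσW), ?_⟩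
  · split_ifs
    exacts [hg y, G.one_mem]
  ext ⟨x, y⟩ ⟨x', y'⟩
  simp only [piPart_conj_apply, wreathPerm_inv_apply, inv_one, Perm.one_apply,
    piPart_wreathPermAtReps_iff hr hr']
  constructor
  · rintro ⟨hyy', hxx'⟩
    rw [hgP] at hxx'
    have hx' := hσP' x' y'
    rw [← hr' y y' hyy'] at hx'
    exact P.trans' (hσP' x y) (P.trans' hxx' (P.symm' hx'))
  · intro hP
    have hyy' : piPart h y y' := hPh hP
    have hx' := hσP' x' y'
    rw [← hr' y y' hyy'] at hx'
    rw [hgP]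
    exact ⟨hyy', P.trans' (P.symm' (hσP' x y)) (P.trans' hP hx')⟩

/-- If `G ≤ Sym(X)` and `H ≤ Sym(Y)` are join-coherent and `Y` is finite, then the wreath
product `G ≀ H` in its imprimitive action on `X × Y` — here given as the subgroup `W` of
`Sym(X × Y)` consisting of all permutations `(x, y) ↦ ((f y) x, h y)` with `f : Y → G`
and `h ∈ H` — is join-coherent. -/
theorem wreath_joinCoherent {X Y : Type*} [Finite Y]
    (G : Subgroup (Equiv.Perm X)) (H : Subgroup (Equiv.Perm Y))
    (hG : JoinCoherent G) (hH : JoinCoherent H)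
    (W : Subgroup (Equiv.Perm (X × Y)))
    (hW : ∀ w : Equiv.Perm (X × Y), w ∈ W ↔
      ∃ f : Y → Equiv.Perm X, ∃ h : Equiv.Perm Y, h ∈ H ∧ (∀ y : Y, f y ∈ G) ∧
        ∀ p : X × Y, w p = (f p.2 p.1, h p.2)) :
    JoinCoherent W := by
  obtain rfl : W = wreath G H := Subgroup.ext hW
  rintro _ ⟨w₁, hw₁, rfl⟩ _ ⟨w₂, hw₂, rfl⟩
  obtain ⟨f₁, h₁, hh₁, hf₁, hw₁'⟩ := id hw₁
  obtain ⟨f₂, h₂, hh₂, hf₂, hw₂'⟩ := id hw₂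
  obtain ⟨h, hh, hQ⟩ := hH _ ⟨h₁, hh₁, rfl⟩ _ ⟨h₂, hh₂, rfl⟩
  have hU : Subgroup.closure {w₁, w₂} ≤ wreath G H :=
    (Subgroup.closure_le _).2 (Set.insert_subset hw₁ (Set.singleton_subset_iff.2 hw₂))
  have hP : orbitRel (Subgroup.closure {w₁, w₂}) (X × Y) = piPart w₁ ⊔ piPart w₂ := by
    rw [orbitRel_closure_eq_sSup, Set.image_pair, sSup_pair]
  refine mem_piSet_wreath hh ?_ ?_ fun ρ => ?_
  · rw [hQ]
    exact sup_le (piPart_le_comap_snd (fun p => by rw [hw₁']) le_sup_left)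
      (piPart_le_comap_snd (fun p => by rw [hw₂']) le_sup_right)
  · rw [hQ]
    exact sup_le (piPart_le_transportRel hw₁' hf₁ le_sup_left)
      (piPart_le_transportRel hw₂' hf₂ le_sup_right)
  · rw [← hP]
    exact hG.comap_orbitRel_mem_piSet hU ρ
end

section
/- Let g ∈ Sym(Ω) be a permutation with infinitely many cycles of length k for some k > 1 (k possibly infinite). Then the centralizer of g in Sym(Ω) is not join-coherent. -/
/-! A permutation commuting with `g` can carry each `g`-cycle onto any `g`-cycle of the same
length, rotated at will. Index infinitely many `g`-cycles of a common length `d ≠ 1` by `ℤ`,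
with base points `x i`, and use coordinates `(i, n) ↦ g ^ n (x i)`. In these coordinates take
`a (i, n) = (-i, n + 1)` and `b (i, n) = (-1 - i, n - 1)`; both commute with `g`, and `a ∘ b` is
`(i, n) ↦ (i + 1, n)`, so the join of their orbit partitions has a block containing `g (x 0)`
and every `x i`. If some `z` commuting with `g` had that join as orbit partition, then
`g (x 0) = z ^ m (x 0)` with `m ≠ 0`, so `g` would act as `z ^ m` on the whole `z`-cycle of
`x 0`; that cycle would then meet at most `|m|` cycles of `g`, not infinitely many. -/

open Equiv Function

section Orbits

variable {Ω : Type*}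

theorem piPart_iff_sameCycle {g : Perm Ω} {y w : Ω} : piPart g y w ↔ g.SameCycle w y := by
  rw [piPart, MulAction.orbitRel_apply, MulAction.mem_orbit_iff]
  constructor
  · rintro ⟨⟨_, n, rfl⟩, rfl⟩
    exact ⟨n, rfl⟩
  · rintro ⟨n, rfl⟩
    exact ⟨⟨g ^ n, n, rfl⟩, rfl⟩

theorem sameCycle_apply_of_piPart_le {a z : Perm Ω} (h : piPart a ≤ piPart z) (y : Ω) :
    z.SameCycle y (a y) :=
  piPart_iff_sameCycle.1 (h (piPart_iff_sameCycle.2 ⟨1, by rw [zpow_one]⟩))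

theorem ncard_setOf_piPart (g : Perm Ω) (y : Ω) :
    {w | piPart g w y}.ncard = minimalPeriod g y := by
  rw [← Nat.card_coe_set_eq]
  exact (Nat.card_congr (MulAction.orbitZPowersEquiv g y)).trans (Nat.card_zmod _)

theorem zpow_apply_eq_self_iff_minimalPeriod_dvd {g : Perm Ω} {y : Ω} {n : ℤ} :
    (g ^ n) y = y ↔ (minimalPeriod g y : ℤ) ∣ n :=
  MulAction.zpow_smul_eq_iff_minimalPeriod_dvd (a := g) (b := y)

theorem exists_seq_minimalPeriod_eq_of_infinite {g : Perm Ω} {d : ℕ}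
    (h : {c ∈ (piPart g).classes | c.ncard = d}.Infinite) :
    ∃ x : ℤ → Ω, (∀ i, minimalPeriod g (x i) = d) ∧ ∀ i j, g.SameCycle (x i) (x j) → i = j := by
  let c := h.natEmbedding
  choose y hy using fun n => (c n).2.1
  refine ⟨fun i => y (Equiv.intEquivNat i), fun i => ?_, fun i j hij => ?_⟩
  · rw [← ncard_setOf_piPart, ← hy]
    exact (c _).2.2
  · refine Equiv.intEquivNat.injective (c.injective (Subtype.ext ?_))
    refine Setoid.eq_of_mem_classes (x := y (Equiv.intEquivNat i)) (c _).2.1 ?_ (c _).2.1 ?_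
    · rw [hy]
      exact (piPart g).refl _
    · rw [hy]
      exact piPart_iff_sameCycle.2 hij.symm

theorem finite_image_setOf_sameCycle {g z : Perm Ω} (hgz : Commute g z) {x : Ω} {m : ℤ}
    (hm : m ≠ 0) (hx : (z ^ m) x = g x) :
    (Quotient.mk (piPart g) '' {y | z.SameCycle x y}).Finite := by
  -- `w` commutes with `z` and fixes `x`, hence fixes the whole `z`-cycle of `x`.
  set w := (z ^ m)⁻¹ * g
  have hwx : w x = x := by simp [w, ← hx]
  have hwz : Commute w z := (((Commute.refl z).zpow_left m).inv_left).mul_left hgz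
  have hg : g = z ^ m * w := (mul_inv_cancel_left _ _).symm
  have hg_zpow : ∀ q r : ℤ, (g ^ q) ((z ^ r) x) = (z ^ (m * q + r)) x := by
    intro q r
    rw [hg, (hwz.symm.zpow_left m).mul_zpow, Perm.mul_apply,
      ← Perm.mul_apply (w ^ q), (hwz.zpow_zpow q r).eq, Perm.mul_apply,
      Perm.zpow_apply_eq_self_of_apply_eq_self hwx, ← Perm.mul_apply, ← zpow_mul, ← zpow_add]
  refine ((Set.finite_Ico 0 |m|).image fun r => Quotient.mk (piPart g) ((z ^ r) x)).subset ?_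
  rintro _ ⟨_, ⟨t, rfl⟩, rfl⟩
  refine ⟨t % m, ⟨Int.emod_nonneg t hm, Int.emod_lt_abs t hm⟩, Quotient.sound ?_⟩
  refine piPart_iff_sameCycle.2 ⟨-(t / m), ?_⟩
  rw [hg_zpow, Int.emod_def, mul_neg, neg_add_eq_sub]

end Orbits

namespace Equiv.Perm

variable {β Ω : Type*} (f : β → Ω) (σ : Perm β) (hσ : ∀ p q, f p = f q ↔ f (σ p) = f (σ q))

open scoped Classical

noncomputable def descend : Perm Ω :=
  Perm.extendDomain (Quotient.congr (ra := Setoid.ker f) (rb := Setoid.ker f) σ hσ)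
    (Setoid.quotientKerEquivRange f)

theorem descend_apply (p : β) : descend f σ hσ (f p) = f (σ p) :=
  extendDomain_apply_image _ (Setoid.quotientKerEquivRange f) (Quotient.mk _ p)

theorem descend_apply_of_notMem_range {y : Ω} (hy : y ∉ Set.range f) : descend f σ hσ y = y :=
  extendDomain_apply_not_subtype _ _ hy

theorem commute_descend {g : Perm Ω} {h : Perm β} (hf : Semiconj f h g) (hσh : Commute σ h) :
    Commute (descend f σ hσ) g := by
  ext y
  by_cases hy : y ∈ Set.range f
  · obtain ⟨p, rfl⟩ := hy
    simp only [mul_apply, ← hf p, descend_apply, ← hf (σ p)]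
    rw [← mul_apply, hσh.eq, mul_apply]
  · have hgy : g y ∉ Set.range f := by
      rintro ⟨p, hp⟩
      refine hy ⟨h⁻¹ p, g.injective ?_⟩
      rw [← hf, ← hp, Perm.coe_inv, apply_symm_apply]
    simp only [mul_apply, descend_apply_of_notMem_range f σ hσ hy,
      descend_apply_of_notMem_range f σ hσ hgy]

end Equiv.Perm

section Ladder

open Perm

variable {Ω : Type*} {g : Perm Ω} {x : ℤ → Ω} {d : ℕ}

theorem zpow_apply_eq_zpow_apply_iff (hper : ∀ i, minimalPeriod g (x i) = d)
    (hdisj : ∀ i j, g.SameCycle (x i) (x j) → i = j) {i j n m : ℤ} :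
    (g ^ n) (x i) = (g ^ m) (x j) ↔ i = j ∧ (d : ℤ) ∣ n - m := by
  constructor
  · intro h
    have hij : (g ^ (n - m)) (x i) = x j := by
      rw [sub_eq_neg_add, zpow_add, mul_apply, h, ← mul_apply, ← zpow_add, neg_add_cancel,
        zpow_zero, one_apply]
    obtain rfl := hdisj i j ⟨n - m, hij⟩
    exact ⟨rfl, hper i ▸ zpow_apply_eq_self_iff_minimalPeriod_dvd.1 hij⟩
  · rintro ⟨rfl, hdvd⟩
    have hfix : (g ^ (n - m)) (x i) = x i :=
      zpow_apply_eq_self_iff_minimalPeriod_dvd.2 (by rwa [hper])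
    rw [← add_sub_cancel m n, zpow_add, mul_apply, hfix]

theorem exists_mem_centralizer_zpow_apply (hper : ∀ i, minimalPeriod g (x i) = d)
    (hdisj : ∀ i j, g.SameCycle (x i) (x j) → i = j) (τ : Perm ℤ) (c : ℤ) :
    ∃ a ∈ Subgroup.centralizer {g}, ∀ i n, a ((g ^ n) (x i)) = (g ^ (n + c)) (x (τ i)) := by
  set f : ℤ × ℤ → Ω := fun p => (g ^ p.2) (x p.1)
  set σ : Perm (ℤ × ℤ) := prodCongr τ (Equiv.addRight c)
  have hσ : ∀ p q, f p = f q ↔ f (σ p) = f (σ q) := by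
    rintro ⟨i, n⟩ ⟨j, m⟩
    simp only [f, σ, prodCongr_apply, Prod.map, coe_addRight,
      zpow_apply_eq_zpow_apply_iff hper hdisj, τ.injective.eq_iff, add_sub_add_right_eq_sub]
  have hf : Semiconj f (prodCongr (Equiv.refl ℤ) (Equiv.addRight 1)) g := by
    rintro ⟨i, n⟩
    simp only [f, prodCongr_apply, Prod.map, coe_refl, id, coe_addRight]
    rw [add_comm, zpow_add, zpow_one, mul_apply]
  have hσ_comm : Commute σ (prodCongr (Equiv.refl ℤ) (Equiv.addRight 1)) := by
    ext ⟨i, n⟩ <;> simp [σ, add_right_comm]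
  refine ⟨descend f σ hσ, ?_, fun i n => (descend_apply f σ hσ (i, n) :)⟩
  exact Subgroup.mem_centralizer_singleton_iff.2 (commute_descend f σ hσ hf hσ_comm).eq

end Ladder

/-- If `g ∈ Sym(Ω)` has infinitely many cycles of length `k` for some `k > 1` (`k` possibly
infinite), then the centralizer of `g` in `Sym(Ω)` is not join-coherent. -/
theorem centralizer_not_joinCoherent {Ω : Type*} (g : Equiv.Perm Ω)
    (hk : (∃ k : ℕ, 1 < k ∧ {c ∈ (piPart g).classes | c.ncard = k}.Infinite) ∨
      {c ∈ (piPart g).classes | c.Infinite}.Infinite) :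
    ¬ JoinCoherent (Subgroup.centralizer {g}) := by
  -- `d = 0` stands for infinite cycles, where both `ncard` and `minimalPeriod` are `0`.
  obtain ⟨d, hd, hinf⟩ : ∃ d ≠ 1, {c ∈ (piPart g).classes | c.ncard = d}.Infinite := by
    rcases hk with ⟨k, hk1, h⟩ | h
    · exact ⟨k, hk1.ne', h⟩
    · exact ⟨0, zero_ne_one, h.mono fun c hc => ⟨hc.1, hc.2.ncard⟩⟩
  obtain ⟨x, hper, hdisj⟩ := exists_seq_minimalPeriod_eq_of_infinite hinf
  obtain ⟨a, ha, hax⟩ := exists_mem_centralizer_zpow_apply hper hdisj (Equiv.neg ℤ) 1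
  obtain ⟨b, hb, hbx⟩ := exists_mem_centralizer_zpow_apply hper hdisj (Equiv.subLeft (-1)) (-1)
  intro hJC
  obtain ⟨z, hz, hzab⟩ := hJC _ ⟨a, ha, rfl⟩ _ ⟨b, hb, rfl⟩
  have hza := sameCycle_apply_of_piPart_le (hzab ▸ le_sup_left : piPart a ≤ piPart z)
  have hzb := sameCycle_apply_of_piPart_le (hzab ▸ le_sup_right : piPart b ≤ piPart z)
  have hladder : ∀ k : ℕ, z.SameCycle (x 0) (x k) := by
    intro k
    induction k with
    | zero => rfl
    | succ k ih =>
      have hab : a (b (x k)) = x (k + 1) := by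
        calc a (b (x k)) = a (b ((g ^ (0 : ℤ)) (x k))) := by rw [zpow_zero, Perm.one_apply]
          _ = x (k + 1) := by rw [hbx, zero_add, hax]; simp
      rw [Nat.cast_succ, ← hab]
      exact ih.trans ((hzb _).trans (hza _))
  have hax0 : a (x 0) = g (x 0) := by simpa using hax 0 0
  obtain ⟨m, hm⟩ : z.SameCycle (x 0) (g (x 0)) := hax0 ▸ hza (x 0)
  have hm0 : m ≠ 0 := by
    rintro rfl
    exact hd (hper 0 ▸ minimalPeriod_eq_one_iff_isFixedPt.2 (by simpa [IsFixedPt] using hm.symm))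
  have hinj : Injective fun k : ℕ => Quotient.mk (piPart g) (x k) := fun k l hkl =>
    Nat.cast_injective (hdisj _ _ (piPart_iff_sameCycle.1 (Quotient.exact hkl))).symm
  refine Set.infinite_range_of_injective hinj ((finite_image_setOf_sameCycle
    (Subgroup.mem_centralizer_singleton_iff.1 hz).symm hm0 hm).subset ?_)
  rintro _ ⟨k, rfl⟩
  exact ⟨x k, hladder k, rfl⟩
end
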